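/- arXiv:1609.08016 — 12 statements merged into one kernel-verified Lean document; each statement's English description precedes it below -/
import Mathlib

section
/- Let E be a finite-dimensional real normed vector space, M ⊆ E, and f : M → ℝ nonnegative, with convex roof f̂ on the convex hull of M. Suppose x = Σᵢ pᵢ xᵢ is a finite convex combination of points xᵢ ∈ M with all weights pᵢ > 0 and Σᵢ pᵢ = 1, and suppose this decomposition attains the convex roof, i.e. f̂(x) = Σᵢ pᵢ f(xᵢ). Then f̂ is linear on the convex hull of {xᵢ}: for every choice of weights tᵢ ≥ 0 with Σᵢ tᵢ = 1 one has f̂(Σᵢ tᵢ xᵢ) = Σᵢ tᵢ f(xᵢ). -/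
open scoped BigOperators

/-- The convex roof of `f : M → ℝ` over the convex hull of `M`:
`f̂(x) = inf { ∑ᵢ pᵢ f(yᵢ) : yᵢ ∈ M, pᵢ ≥ 0, ∑ᵢ pᵢ = 1, ∑ᵢ pᵢ yᵢ = x }`. -/
noncomputable def convexRoof {E : Type*} [NormedAddCommGroup E] [NormedSpace ℝ E]
    (M : Set E) (f : E → ℝ) (x : E) : ℝ :=
  sInf { r : ℝ | ∃ (n : ℕ) (p : Fin n → ℝ) (y : Fin n → E),
    (∀ i, 0 ≤ p i) ∧ (∑ i, p i = 1) ∧ (∀ i, y i ∈ M) ∧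
    (∑ i, p i • y i = x) ∧ r = ∑ i, p i * f (y i) }

/-!
Write `X = ∑ pᵢ xᵢ` and `T = ∑ tᵢ xᵢ`. Since all `pᵢ > 0`, for small `ε > 0` the weights
`pᵢ - ε tᵢ` are nonnegative, so `X = ∑ (pᵢ - ε tᵢ) xᵢ + ε T`. Splicing any decomposition
`T = ∑ qⱼ zⱼ` into this gives a decomposition of `X`, and optimality of `p` yields
`∑ pᵢ f(xᵢ) ≤ ∑ (pᵢ - ε tᵢ) f(xᵢ) + ε ∑ qⱼ f(zⱼ)`, i.e. `∑ tᵢ f(xᵢ) ≤ ∑ qⱼ f(zⱼ)`.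
-/

section ConvexRoof

variable {E : Type*} [NormedAddCommGroup E] [NormedSpace ℝ E] {M : Set E} {f : E → ℝ}

theorem convexRoof_le_sum (hf : ∀ y ∈ M, 0 ≤ f y) {m : ℕ} (q : Fin m → ℝ) (z : Fin m → E)
    (hq : ∀ j, 0 ≤ q j) (hqs : ∑ j, q j = 1) (hz : ∀ j, z j ∈ M) :
    convexRoof M f (∑ j, q j • z j) ≤ ∑ j, q j * f (z j) := by
  refine csInf_le ⟨0, ?_⟩ ⟨m, q, z, hq, hqs, hz, rfl, rfl⟩
  rintro r ⟨k, w, y, hw, -, hy, -, rfl⟩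
  exact Finset.sum_nonneg fun j _ => mul_nonneg (hw j) (hf _ (hy j))

theorem le_convexRoof {x : E} {c : ℝ}
    (hx : ∃ (m : ℕ) (q : Fin m → ℝ) (z : Fin m → E),
      (∀ j, 0 ≤ q j) ∧ ∑ j, q j = 1 ∧ (∀ j, z j ∈ M) ∧ ∑ j, q j • z j = x)
    (hc : ∀ (m : ℕ) (q : Fin m → ℝ) (z : Fin m → E), (∀ j, 0 ≤ q j) → ∑ j, q j = 1 →
      (∀ j, z j ∈ M) → ∑ j, q j • z j = x → c ≤ ∑ j, q j * f (z j)) :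
    c ≤ convexRoof M f x := by
  obtain ⟨m, q, z, hq, hqs, hz, hqz⟩ := hx
  refine le_csInf ⟨_, m, q, z, hq, hqs, hz, hqz, rfl⟩ ?_
  rintro r ⟨k, w, y, hw, hws, hy, hwy, rfl⟩
  exact hc k w y hw hws hy hwy

theorem convexRoof_sum_add_smul_sum_le (hf : ∀ y ∈ M, 0 ≤ f y) {n m : ℕ}
    (w : Fin n → ℝ) (y : Fin n → E) (a : ℝ) (q : Fin m → ℝ) (z : Fin m → E)
    (hw : ∀ i, 0 ≤ w i) (ha : 0 ≤ a) (hwa : ∑ i, w i + a = 1) (hy : ∀ i, y i ∈ M)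
    (hq : ∀ j, 0 ≤ q j) (hqs : ∑ j, q j = 1) (hz : ∀ j, z j ∈ M) :
    convexRoof M f (∑ i, w i • y i + a • ∑ j, q j • z j) ≤
      ∑ i, w i * f (y i) + a * ∑ j, q j * f (z j) := by
  have key := convexRoof_le_sum hf (Fin.append w (a • q)) (Fin.append y z)
    (fun k => Fin.addCases (by simpa using hw) (by simpa using fun j => mul_nonneg ha (hq j)) k)
    (by simp [Fin.sum_univ_add, ← Finset.mul_sum, hqs, hwa])
    (fun k => Fin.addCases (by simpa using hy) (by simpa using hz) k)
  simpa [Fin.sum_univ_add, Finset.smul_sum, Finset.mul_sum, smul_smul, mul_assoc] using key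

end ConvexRoof

open Filter Topology in
theorem exists_pos_forall_mul_lt {ι : Type*} [Finite ι] (p t : ι → ℝ) (hp : ∀ i, 0 < p i) :
    ∃ ε > 0, ∀ i, ε * t i < p i := by
  have hsmall : ∀ᶠ ε in 𝓝[>] (0 : ℝ), ∀ i, ε * t i < p i := by
    refine eventually_all.2 fun i => ?_
    have hlim : Tendsto (fun ε : ℝ => ε * t i) (𝓝 0) (𝓝 0) :=
      (continuous_mul_const (t i)).tendsto' 0 0 (zero_mul (t i))
    exact nhdsWithin_le_nhds (hlim.eventually (gt_mem_nhds (hp i)))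
  obtain ⟨ε, hε, hεpos⟩ := (hsmall.and self_mem_nhdsWithin).exists
  exact ⟨ε, hεpos, hε⟩

theorem convexRoof_linear_on_optimal_decomposition_general
    {E : Type*} [NormedAddCommGroup E] [NormedSpace ℝ E]
    (M : Set E) (f : E → ℝ) (hf : ∀ y ∈ M, 0 ≤ f y)
    {n : ℕ} (p : Fin n → ℝ) (x : Fin n → E)
    (hp : ∀ i, 0 < p i) (hps : ∑ i, p i = 1) (hxM : ∀ i, x i ∈ M)
    (hopt : convexRoof M f (∑ i, p i • x i) = ∑ i, p i * f (x i))
    (t : Fin n → ℝ) (ht : ∀ i, 0 ≤ t i) (hts : ∑ i, t i = 1) :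
    convexRoof M f (∑ i, t i • x i) = ∑ i, t i * f (x i) := by
  refine le_antisymm (convexRoof_le_sum hf t x ht hts hxM)
    (le_convexRoof ⟨n, t, x, ht, hts, hxM, rfl⟩ fun m q z hq hqs hz hqz => ?_)
  obtain ⟨ε, hε, hεt⟩ := exists_pos_forall_mul_lt p t hp
  have hsplit : ∑ i, p i • x i = ∑ i, (p i - ε * t i) • x i + ε • ∑ j, q j • z j := by
    rw [hqz, Finset.smul_sum, ← Finset.sum_add_distrib]
    exact Finset.sum_congr rfl fun i _ => by rw [sub_smul, mul_smul, sub_add_cancel]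
  have hmix := convexRoof_sum_add_smul_sum_le hf (fun i => p i - ε * t i) x ε q z
    (fun i => sub_nonneg.2 (hεt i).le) hε.le
    (by rw [Finset.sum_sub_distrib, ← Finset.mul_sum, hps, hts]; ring) hxM hq hqs hz
  rw [← hsplit, hopt] at hmix
  have hdiff : ∑ i, p i * f (x i) - ∑ i, (p i - ε * t i) * f (x i) = ε * ∑ i, t i * f (x i) := by
    rw [← Finset.sum_sub_distrib, Finset.mul_sum]
    exact Finset.sum_congr rfl fun i _ => by ring
  exact le_of_mul_le_mul_left (by linarith) hε

/-- If a finite convex decomposition `x = ∑ᵢ pᵢ xᵢ` with `xᵢ ∈ M`, `pᵢ > 0`, attains the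
convex roof of a nonnegative function `f`, then the convex roof is linear on the convex
hull of the `xᵢ`. -/
theorem convexRoof_linear_on_optimal_decomposition
    {E : Type*} [NormedAddCommGroup E] [NormedSpace ℝ E] [FiniteDimensional ℝ E]
    (M : Set E) (f : E → ℝ) (hf : ∀ y ∈ M, 0 ≤ f y)
    {n : ℕ} (p : Fin n → ℝ) (x : Fin n → E)
    (hp : ∀ i, 0 < p i) (hps : ∑ i, p i = 1) (hxM : ∀ i, x i ∈ M)
    (hopt : convexRoof M f (∑ i, p i • x i) = ∑ i, p i * f (x i))
    (t : Fin n → ℝ) (ht : ∀ i, 0 ≤ t i) (hts : ∑ i, t i = 1) :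
    convexRoof M f (∑ i, t i • x i) = ∑ i, t i * f (x i) :=
  convexRoof_linear_on_optimal_decomposition_general M f hf p x hp hps hxM hopt t ht hts
end

section
/- Let G be a compact topological group with normalized Haar probability measure μ, acting on a finite-dimensional real normed vector space E by linear maps with jointly continuous action map. Let K ⊆ E be a compact convex set with g·K ⊆ K, let M ⊆ K be compact and G-invariant (g·y ∈ M for all y ∈ M, g ∈ G), and let f : M → ℝ be continuous, nonnegative, and G-invariant (f(g·y) = f(y)). Define T(x) = ∫_G g·x dμ(g) and f_G(z) = inf { f(y) : y ∈ M, T(y) = z } on T(M). Suppose ψ ∈ M satisfies f(ψ) = f_G(T(ψ)), and suppose the convex roof of f_G at ρ := T(ψ) equals f_G(ρ). Then the convex roof of f is constant on the convex hull of the orbit of ψ: for every σ in the convex hull of { g·ψ : g ∈ G }, f̂(σ) = f(ψ). -/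
open scoped BigOperators
open MeasureTheory

/-!
Write `σ = ∑ pᵢ gᵢ • ψ`. Since `f` is constant on the orbit, this decomposition already shows
`f̂(σ) ≤ f(ψ)`. Conversely, the twirl `T` is linear and constant on orbits, so any decomposition
`σ = ∑ qⱼ xⱼ` over `M` is mapped to a decomposition `T ψ = T σ = ∑ qⱼ T xⱼ` over `T(M)`; hence
`f(ψ) = f_G(T ψ) = f̂_G(T ψ) ≤ ∑ qⱼ f_G(T xⱼ) ≤ ∑ qⱼ f(xⱼ)`.
-/

theorem exists_fin_sum_eq_of_mem_convexHull {E : Type*} [AddCommGroup E] [Module ℝ E]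
    {s : Set E} {x : E} (hx : x ∈ convexHull ℝ s) :
    ∃ (n : ℕ) (p : Fin n → ℝ) (y : Fin n → E), (∀ i, 0 ≤ p i) ∧ ∑ i, p i = 1 ∧
      (∀ i, y i ∈ s) ∧ ∑ i, p i • y i = x := by
  obtain ⟨ι, _, w, z, hw₀, hw₁, hz, rfl⟩ := mem_convexHull_iff_exists_fintype.1 hx
  let e := (Fintype.equivFin ι).symm
  exact ⟨_, w ∘ e, z ∘ e, fun i => hw₀ _, (e.sum_comp w).trans hw₁, fun i => hz _,
    e.sum_comp fun i => w i • z i⟩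

section ConvexRoof

variable {E : Type*} [NormedAddCommGroup E] [NormedSpace ℝ E] {M : Set E} {f : E → ℝ} {c : ℝ}

theorem convexRoof_le_sum_s2 (hf : ∀ y ∈ M, c ≤ f y) {n : ℕ} {p : Fin n → ℝ} {y : Fin n → E}
    (hp₀ : ∀ i, 0 ≤ p i) (hp₁ : ∑ i, p i = 1) (hy : ∀ i, y i ∈ M) :
    convexRoof M f (∑ i, p i • y i) ≤ ∑ i, p i * f (y i) := by
  refine csInf_le ⟨c, ?_⟩ ⟨n, p, y, hp₀, hp₁, hy, rfl, rfl⟩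
  rintro _ ⟨m, q, z, hq₀, hq₁, hz, -, rfl⟩
  calc c = ∑ i, q i * c := by rw [← Finset.sum_mul, hq₁, one_mul]
    _ ≤ ∑ i, q i * f (z i) :=
      Finset.sum_le_sum fun i _ => mul_le_mul_of_nonneg_left (hf _ (hz i)) (hq₀ i)

theorem le_convexRoof_s2 {x : E} (hx : x ∈ convexHull ℝ M)
    (h : ∀ (n : ℕ) (p : Fin n → ℝ) (y : Fin n → E), (∀ i, 0 ≤ p i) → ∑ i, p i = 1 →
      (∀ i, y i ∈ M) → ∑ i, p i • y i = x → c ≤ ∑ i, p i * f (y i)) :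
    c ≤ convexRoof M f x := by
  obtain ⟨n, p, y, hp₀, hp₁, hy, hpy⟩ := exists_fin_sum_eq_of_mem_convexHull hx
  refine le_csInf ⟨_, n, p, y, hp₀, hp₁, hy, hpy, rfl⟩ ?_
  rintro _ ⟨m, q, z, hq₀, hq₁, hz, hqz, rfl⟩
  exact h m q z hq₀ hq₁ hz hqz

theorem convexRoof_le_of_forall_eq {S : Set E} {a : ℝ} (hSM : S ⊆ M) (hS : ∀ y ∈ S, f y = a)
    (hf : ∀ y ∈ M, c ≤ f y) {x : E} (hx : x ∈ convexHull ℝ S) : convexRoof M f x ≤ a := by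
  obtain ⟨n, p, y, hp₀, hp₁, hy, rfl⟩ := exists_fin_sum_eq_of_mem_convexHull hx
  calc convexRoof M f (∑ i, p i • y i) ≤ ∑ i, p i * f (y i) :=
        convexRoof_le_sum_s2 hf hp₀ hp₁ fun i => hSM (hy i)
    _ = a := by simp only [hS _ (hy _), ← Finset.sum_mul, hp₁, one_mul]

theorem convexRoof_map_le {F : Type*} [NormedAddCommGroup F] [NormedSpace ℝ F]
    (A : E →ₗ[ℝ] F) {N : Set F} {h : F → ℝ} (hAM : ∀ y ∈ M, A y ∈ N)
    (hhf : ∀ y ∈ M, h (A y) ≤ f y) (hh : ∀ z ∈ N, c ≤ h z) {x : E} (hx : x ∈ convexHull ℝ M) :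
    convexRoof N h (A x) ≤ convexRoof M f x := by
  refine le_convexRoof_s2 hx fun n p y hp₀ hp₁ hy hpy => ?_
  calc convexRoof N h (A x) = convexRoof N h (∑ i, p i • A (y i)) := by
        simp only [← hpy, map_sum, map_smul]
    _ ≤ ∑ i, p i * h (A (y i)) := convexRoof_le_sum_s2 hh hp₀ hp₁ fun i => hAM _ (hy i)
    _ ≤ ∑ i, p i * f (y i) :=
      Finset.sum_le_sum fun i _ => mul_le_mul_of_nonneg_left (hhf _ (hy i)) (hp₀ i)

end ConvexRoof

section FiberInf

variable {α β : Type*} {M : Set α} {f : α → ℝ} {c : ℝ} (T : α → β)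

theorem sInf_fiber_le (hf : ∀ y ∈ M, c ≤ f y) {y : α} (hy : y ∈ M) :
    sInf {r : ℝ | ∃ y' ∈ M, T y' = T y ∧ r = f y'} ≤ f y := by
  refine csInf_le ⟨c, ?_⟩ ⟨y, hy, rfl, rfl⟩
  rintro _ ⟨y', hy', -, rfl⟩
  exact hf _ hy'

theorem le_sInf_fiber (hf : ∀ y ∈ M, c ≤ f y) {y : α} (hy : y ∈ M) :
    c ≤ sInf {r : ℝ | ∃ y' ∈ M, T y' = T y ∧ r = f y'} := by
  refine le_csInf ⟨f y, y, hy, rfl, rfl⟩ ?_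
  rintro _ ⟨y', hy', -, rfl⟩
  exact hf _ hy'

end FiberInf

section Twirl

variable {G : Type*} [Group G] [MeasurableSpace G] (μ : Measure G)
  {E : Type*} [NormedAddCommGroup E] [MulAction G E]

/-- Compact groups are unimodular: a right translate of the Haar probability measure is again
a Haar probability measure, hence equal to it. -/
theorem isMulRightInvariant_of_isProbabilityMeasure [TopologicalSpace G] [IsTopologicalGroup G]
    [CompactSpace G] [BorelSpace G] [μ.IsHaarMeasure] [IsProbabilityMeasure μ] :
    μ.IsMulRightInvariant where
  map_mul_right_eq_self g :=
    have : IsProbabilityMeasure (μ.map (· * g)) :=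
      Measure.isProbabilityMeasure_map (measurable_mul_const g).aemeasurable
    Measure.isHaarMeasure_eq_of_isProbabilityMeasure _ μ

theorem integrable_smul_const [TopologicalSpace G] [CompactSpace G] [OpensMeasurableSpace G]
    [ContinuousSMul G E] [IsFiniteMeasure μ] (x : E) : Integrable (fun g : G => g • x) μ :=
  (continuous_id.smul continuous_const).integrable_of_hasCompactSupport
    (HasCompactSupport.of_compactSpace _)

theorem integral_smul_smul_eq [NormedSpace ℝ E] [MeasurableMul G] [μ.IsMulRightInvariant]
    (g₀ : G) (x : E) : ∫ g, g • g₀ • x ∂μ = ∫ g, g • x ∂μ := by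
  simp only [smul_smul]
  exact integral_mul_right_eq_self (fun g => g • x) g₀

theorem isLinearMap_integral_smul [NormedSpace ℝ E] [TopologicalSpace G] [CompactSpace G]
    [OpensMeasurableSpace G] [ContinuousSMul G E] [IsFiniteMeasure μ]
    (hlin : ∀ g : G, IsLinearMap ℝ (fun x : E => g • x)) :
    IsLinearMap ℝ (fun x : E => ∫ g, g • x ∂μ) where
  map_add x y := by
    simp only [(hlin _).map_add]
    exact integral_add (integrable_smul_const μ x) (integrable_smul_const μ y)
  map_smul a x := by
    simp only [(hlin _).map_smul]
    exact integral_smul a _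

end Twirl

theorem convexRoof_constant_on_convexHull_orbit_general
    {G : Type*} [Group G] [TopologicalSpace G] [IsTopologicalGroup G] [CompactSpace G]
    [MeasurableSpace G] [BorelSpace G]
    (μ : Measure G) [μ.IsHaarMeasure] [IsProbabilityMeasure μ]
    {E : Type*} [NormedAddCommGroup E] [NormedSpace ℝ E]
    [MulAction G E] [ContinuousSMul G E]
    (hlin : ∀ g : G, IsLinearMap ℝ (fun x : E => g • x))
    (M : Set E)
    (hMinv : ∀ (g : G), ∀ y ∈ M, g • y ∈ M)
    (f : E → ℝ) (hf0 : ∀ y ∈ M, 0 ≤ f y)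
    (hfinv : ∀ (g : G), ∀ y ∈ M, f (g • y) = f y)
    (T : E → E) (hT : ∀ x, T x = ∫ g, g • x ∂μ)
    (fG : E → ℝ)
    (hfG : ∀ z ∈ T '' M, fG z = sInf { r : ℝ | ∃ y ∈ M, T y = z ∧ r = f y })
    (ψ : E) (hψ : ψ ∈ M) (hmin : f ψ = fG (T ψ))
    (hroof : convexRoof (T '' M) fG (T ψ) = fG (T ψ)) :
    ∀ σ ∈ convexHull ℝ (MulAction.orbit G ψ), convexRoof M f σ = f ψ := by
  intro σ hσ
  have := isMulRightInvariant_of_isProbabilityMeasure μ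
  have hTlin : IsLinearMap ℝ T := funext hT ▸ isLinearMap_integral_smul μ hlin
  have horbM : MulAction.orbit G ψ ⊆ M := by rintro _ ⟨g, rfl⟩; exact hMinv g ψ hψ
  have hTσ : T σ = T ψ := by
    have hTorb : T '' MulAction.orbit G ψ ⊆ {T ψ} := by
      rintro _ ⟨_, ⟨g, rfl⟩, rfl⟩
      simp only [hT, integral_smul_smul_eq, Set.mem_singleton_iff]
    have hTσ_mem : T σ ∈ convexHull ℝ (T '' MulAction.orbit G ψ) :=
      hTlin.image_convexHull _ ▸ Set.mem_image_of_mem T hσ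
    exact convexHull_min hTorb (convex_singleton _) hTσ_mem
  have hfG₀ : ∀ z ∈ T '' M, 0 ≤ fG z := by
    rintro _ ⟨y, hy, rfl⟩
    exact (hfG _ ⟨y, hy, rfl⟩).symm ▸ le_sInf_fiber T hf0 hy
  have hfG_le : ∀ y ∈ M, fG (T y) ≤ f y := fun y hy =>
    (hfG _ ⟨y, hy, rfl⟩).symm ▸ sInf_fiber_le T hf0 hy
  refine le_antisymm (convexRoof_le_of_forall_eq horbM ?_ hf0 hσ) ?_
  · rintro _ ⟨g, rfl⟩
    exact hfinv g ψ hψ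
  calc f ψ = convexRoof (T '' M) fG (T σ) := by rw [hTσ, hroof, hmin]
    _ ≤ convexRoof M f σ := convexRoof_map_le (IsLinearMap.mk' T hTlin)
        (fun y hy => Set.mem_image_of_mem T hy) hfG_le hfG₀ (convexHull_mono horbM hσ)

/-- If `ψ ∈ M` minimizes the `G`-invariant function `f` among preimages of `ρ = T ψ`
under the twirling operator `T`, and the convex roof of `f_G` at `ρ` equals `f_G(ρ)`,
then the convex roof of `f` is constant, equal to `f(ψ)`, on the convex hull of the
orbit of `ψ`. -/
theorem convexRoof_constant_on_convexHull_orbit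
    {G : Type*} [Group G] [TopologicalSpace G] [IsTopologicalGroup G] [CompactSpace G]
    [MeasurableSpace G] [BorelSpace G]
    (μ : Measure G) [μ.IsHaarMeasure] [IsProbabilityMeasure μ]
    {E : Type*} [NormedAddCommGroup E] [NormedSpace ℝ E] [FiniteDimensional ℝ E]
    [MulAction G E] [ContinuousSMul G E]
    (hlin : ∀ g : G, IsLinearMap ℝ (fun x : E => g • x))
    (K : Set E) (hKcpt : IsCompact K) (hKconv : Convex ℝ K)
    (hKinv : ∀ (g : G), ∀ x ∈ K, g • x ∈ K)
    (M : Set E) (hMcpt : IsCompact M) (hMK : M ⊆ K)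
    (hMinv : ∀ (g : G), ∀ y ∈ M, g • y ∈ M)
    (f : E → ℝ) (hfc : ContinuousOn f M) (hf0 : ∀ y ∈ M, 0 ≤ f y)
    (hfinv : ∀ (g : G), ∀ y ∈ M, f (g • y) = f y)
    (T : E → E) (hT : ∀ x, T x = ∫ g, g • x ∂μ)
    (fG : E → ℝ)
    (hfG : ∀ z ∈ T '' M, fG z = sInf { r : ℝ | ∃ y ∈ M, T y = z ∧ r = f y })
    (ψ : E) (hψ : ψ ∈ M) (hmin : f ψ = fG (T ψ))
    (hroof : convexRoof (T '' M) fG (T ψ) = fG (T ψ)) :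
    ∀ σ ∈ convexHull ℝ (MulAction.orbit G ψ), convexRoof M f σ = f ψ :=
  convexRoof_constant_on_convexHull_orbit_general μ hlin M hMinv f hf0 hfinv T hT fG hfG ψ hψ hmin
    hroof
end

section
/- Let d ≥ 2, let U be a d×d complex unitary matrix, and let λ : Fin d → ℝ satisfy λᵢ ≥ 0 for all i and Σᵢ λᵢ = 1. Set a := (1/4) Σ_{i,j} |√(λᵢ)·U_{ij} − √(λⱼ)·U_{ji}|². If 1/2 ≤ a, then a ≤ 1 and for every index i one has λᵢ ≤ 1/2 + √(a(1−a)). -/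
/-!
Put `ψ (i, j) = √λᵢ Uᵢⱼ`, a unit vector of `ℂᵈ ⊗ ℂᵈ`. Its antisymmetric part `ψ⁻` has squared norm
`a`, so its symmetric part `ψ⁺` has squared norm `1 - a`, whence `a ≤ 1`. The product vector
`v = eₖ ⊗ (row k of U)` is a unit vector with `⟪v, ψ⟫ = √λₖ`, and like every product vector it has
`‖v⁻‖² ≤ 1/2`, because `⟪x ⊗ y, y ⊗ x⟫ = |⟪x, y⟫|² ≥ 0`. Splitting `⟪v, ψ⟫ = ⟪v⁻, ψ⁻⟫ + ⟪v⁺, ψ⁺⟫`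
and applying Cauchy–Schwarz to each term gives `√λₖ ≤ ‖v⁻‖ √a + ‖v⁺‖ √(1 - a)`; maximizing the
right-hand side under `‖v⁻‖² ≤ 1/2 ≤ a` gives `λₖ ≤ 1/2 + √(a (1 - a))`.
-/

open scoped BigOperators InnerProductSpace

-- On the arc a² + b² = 1, a² ≤ 1/2, the maximum of a x + b y (x ≥ y ≥ 0) sits at a = b.
theorem mul_add_mul_sq_le_half_add_mul {a b x y : ℝ} (hx : 0 ≤ x) (hy : 0 ≤ y)
    (hab : a ^ 2 + b ^ 2 = 1) (ha2 : a ^ 2 ≤ 1 / 2) (hxy : x ^ 2 + y ^ 2 = 1)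
    (hyx : y ^ 2 ≤ x ^ 2) : (a * x + b * y) ^ 2 ≤ 1 / 2 + x * y := by
  have hab2 : 2 * a * b ≤ 1 := by nlinarith [sq_nonneg (a - b)]
  have : 2 * (a * x + b * y) ^ 2 ≤ (x + y) ^ 2 := by
    nlinarith [mul_nonneg (by linarith : 0 ≤ b ^ 2 - a ^ 2) (by linarith : 0 ≤ x ^ 2 - y ^ 2),
      mul_nonneg (mul_nonneg hx hy) (by linarith : (0 : ℝ) ≤ 1 - 2 * a * b)]
  nlinarith

namespace LinearIsometryEquiv

variable {𝕜 E : Type*} [RCLike 𝕜] [NormedAddCommGroup E] [InnerProductSpace 𝕜 E]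
  (S : E ≃ₗᵢ[𝕜] E)

noncomputable def antisymPart (x : E) : E := (2⁻¹ : 𝕜) • (x - S x)

noncomputable def symPart (x : E) : E := (2⁻¹ : 𝕜) • (x + S x)

theorem antisymPart_add_symPart (x : E) : S.antisymPart x + S.symPart x = x := by
  rw [antisymPart, symPart]
  module

theorem norm_antisymPart_sq (x : E) :
    ‖S.antisymPart x‖ ^ 2 = (‖x‖ ^ 2 - RCLike.re ⟪x, S x⟫_𝕜) / 2 := by
  rw [antisymPart, norm_smul, mul_pow, @norm_sub_sq 𝕜, S.norm_map]
  norm_num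
  ring

variable {S} (hS : Function.Involutive S)
include hS

theorem inner_antisymPart_symPart (x y : E) : ⟪S.antisymPart x, S.symPart y⟫_𝕜 = 0 := by
  have hSx : ⟪S x, y⟫_𝕜 = ⟪x, S y⟫_𝕜 := by
    conv_lhs => rw [← hS y]
    exact S.inner_map_map x (S y)
  simp only [antisymPart, symPart, inner_smul_left, inner_smul_right, inner_sub_left,
    inner_add_right, S.inner_map_map, hSx]
  ring

theorem inner_eq_inner_antisymPart_add_inner_symPart (x y : E) :
    ⟪x, y⟫_𝕜 = ⟪S.antisymPart x, S.antisymPart y⟫_𝕜 + ⟪S.symPart x, S.symPart y⟫_𝕜 := by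
  conv_lhs => rw [← S.antisymPart_add_symPart x, ← S.antisymPart_add_symPart y]
  rw [inner_add_left, inner_add_right, inner_add_right, inner_antisymPart_symPart hS,
    ← inner_conj_symm (S.symPart x), inner_antisymPart_symPart hS, RingHom.map_zero, add_zero,
    zero_add]

theorem norm_antisymPart_sq_add_norm_symPart_sq (x : E) :
    ‖S.antisymPart x‖ ^ 2 + ‖S.symPart x‖ ^ 2 = ‖x‖ ^ 2 := by
  conv_rhs => rw [← S.antisymPart_add_symPart x]
  simpa only [sq] using
    (norm_add_sq_eq_norm_sq_add_norm_sq_of_inner_eq_zero _ _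
      (inner_antisymPart_symPart hS x x)).symm

theorem norm_inner_le_antisymPart_add_symPart (x y : E) :
    ‖⟪x, y⟫_𝕜‖ ≤ ‖S.antisymPart x‖ * ‖S.antisymPart y‖ + ‖S.symPart x‖ * ‖S.symPart y‖ := by
  rw [inner_eq_inner_antisymPart_add_inner_symPart hS]
  exact (norm_add_le _ _).trans (add_le_add (norm_inner_le_norm _ _) (norm_inner_le_norm _ _))

theorem norm_inner_sq_le_half_add {v ψ : E} (hv : ‖v‖ = 1) (hψ : ‖ψ‖ = 1)
    (hv' : ‖S.antisymPart v‖ ^ 2 ≤ 1 / 2) (hψ' : 1 / 2 ≤ ‖S.antisymPart ψ‖ ^ 2) :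
    ‖⟪v, ψ⟫_𝕜‖ ^ 2 ≤ 1 / 2 + ‖S.antisymPart ψ‖ * ‖S.symPart ψ‖ := by
  have hv2 := norm_antisymPart_sq_add_norm_symPart_sq hS v
  have hψ2 := norm_antisymPart_sq_add_norm_symPart_sq hS ψ
  rw [hv, one_pow] at hv2
  rw [hψ, one_pow] at hψ2
  calc ‖⟪v, ψ⟫_𝕜‖ ^ 2
      ≤ (‖S.antisymPart v‖ * ‖S.antisymPart ψ‖ + ‖S.symPart v‖ * ‖S.symPart ψ‖) ^ 2 :=
        pow_le_pow_left₀ (norm_nonneg _) (norm_inner_le_antisymPart_add_symPart hS v ψ) 2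
    _ ≤ 1 / 2 + ‖S.antisymPart ψ‖ * ‖S.symPart ψ‖ :=
        mul_add_mul_sq_le_half_add_mul (norm_nonneg _) (norm_nonneg _) hv2 hv' hψ2 (by linarith)

end LinearIsometryEquiv

namespace EuclideanSpace

variable {𝕜 ι : Type*} [RCLike 𝕜]

def tmul (x y : EuclideanSpace 𝕜 ι) : EuclideanSpace 𝕜 (ι × ι) :=
  WithLp.toLp 2 fun p => x p.1 * y p.2

theorem tmul_apply (x y : EuclideanSpace 𝕜 ι) (p : ι × ι) : tmul x y p = x p.1 * y p.2 := rfl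

variable [Fintype ι]

noncomputable def swap : EuclideanSpace 𝕜 (ι × ι) ≃ₗᵢ[𝕜] EuclideanSpace 𝕜 (ι × ι) :=
  LinearIsometryEquiv.piLpCongrLeft 2 𝕜 𝕜 (Equiv.prodComm ι ι)

theorem swap_apply (x : EuclideanSpace 𝕜 (ι × ι)) (p : ι × ι) : swap x p = x p.swap := rfl

theorem swap_involutive : Function.Involutive (swap : EuclideanSpace 𝕜 (ι × ι) → _) :=
  fun _ => rfl

theorem norm_tmul (x y : EuclideanSpace 𝕜 ι) : ‖tmul x y‖ = ‖x‖ * ‖y‖ := by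
  rw [← sq_eq_sq₀ (norm_nonneg _) (by positivity), mul_pow, norm_sq_eq, norm_sq_eq, norm_sq_eq,
    Fintype.sum_prod_type, Finset.sum_mul_sum]
  simp only [tmul_apply, norm_mul, mul_pow]

theorem inner_tmul_swap_tmul (x y : EuclideanSpace 𝕜 ι) :
    ⟪tmul x y, swap (tmul x y)⟫_𝕜 = ⟪x, y⟫_𝕜 * ⟪y, x⟫_𝕜 := by
  simp only [PiLp.inner_apply, Fintype.sum_prod_type, Finset.sum_mul_sum, swap_apply, tmul_apply,
    Prod.swap, RCLike.inner_apply, map_mul]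
  exact Finset.sum_congr rfl fun i _ => Finset.sum_congr rfl fun j _ => by ring

theorem norm_antisymPart_tmul_sq_le (x y : EuclideanSpace 𝕜 ι) :
    ‖swap.antisymPart (tmul x y)‖ ^ 2 ≤ ‖tmul x y‖ ^ 2 / 2 := by
  have : 0 ≤ RCLike.re ⟪tmul x y, swap (tmul x y)⟫_𝕜 := by
    rw [inner_tmul_swap_tmul, ← inner_conj_symm x y, RCLike.conj_mul]
    norm_cast
    positivity
  rw [LinearIsometryEquiv.norm_antisymPart_sq]
  linarith

end EuclideanSpace

theorem Matrix.sum_norm_sq_row_of_mem_unitaryGroup {𝕜 ι : Type*} [RCLike 𝕜] [Fintype ι]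
    [DecidableEq ι] {U : Matrix ι ι 𝕜} (hU : U ∈ Matrix.unitaryGroup ι 𝕜) (i : ι) :
    ∑ j, ‖U i j‖ ^ 2 = 1 := by
  have h := congr_fun₂ (Matrix.mem_unitaryGroup_iff.mp hU) i i
  simp only [Matrix.mul_apply, Matrix.star_apply, Matrix.one_apply_eq, RCLike.star_def,
    RCLike.mul_conj] at h
  exact_mod_cast h

section SchmidtState

variable {ι : Type*} [Fintype ι]

noncomputable def schmidtState (lam : ι → ℝ) (U : Matrix ι ι ℂ) : EuclideanSpace ℂ (ι × ι) :=
  WithLp.toLp 2 fun p => (√(lam p.1) : ℂ) * U p.1 p.2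

theorem norm_antisymPart_schmidtState_sq (lam : ι → ℝ) (U : Matrix ι ι ℂ) :
    ‖EuclideanSpace.swap.antisymPart (schmidtState lam U)‖ ^ 2 =
      1 / 4 * ∑ i, ∑ j, ‖(√(lam i) : ℂ) * U i j - (√(lam j) : ℂ) * U j i‖ ^ 2 := by
  simp only [EuclideanSpace.norm_sq_eq, Fintype.sum_prod_type, LinearIsometryEquiv.antisymPart,
    PiLp.sub_apply, EuclideanSpace.swap_apply, schmidtState,
    Prod.swap, norm_smul, mul_pow, Finset.mul_sum]
  norm_num

variable [DecidableEq ι] {lam : ι → ℝ} {U : Matrix ι ι ℂ}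

theorem norm_sq_schmidtState (hlam : ∀ i, 0 ≤ lam i) (hU : U ∈ Matrix.unitaryGroup ι ℂ) :
    ‖schmidtState lam U‖ ^ 2 = ∑ i, lam i := by
  simp only [EuclideanSpace.norm_sq_eq, Fintype.sum_prod_type, schmidtState,
    norm_mul, mul_pow, Complex.norm_real, Real.norm_eq_abs, sq_abs, Real.sq_sqrt (hlam _),
    ← Finset.mul_sum, Matrix.sum_norm_sq_row_of_mem_unitaryGroup hU, mul_one]

theorem inner_tmul_single_row_schmidtState (hU : U ∈ Matrix.unitaryGroup ι ℂ) (k : ι) :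
    ⟪EuclideanSpace.tmul (EuclideanSpace.single k 1) (WithLp.toLp 2 (U k)),
      schmidtState lam U⟫_ℂ = √(lam k) := by
  have hrow : ∑ j, U k j * starRingEnd ℂ (U k j) = 1 := by
    simp only [Complex.mul_conj']
    exact_mod_cast Matrix.sum_norm_sq_row_of_mem_unitaryGroup hU k
  rw [PiLp.inner_apply, Fintype.sum_prod_type, Fintype.sum_eq_single k fun i hi => by
    simp [EuclideanSpace.tmul_apply, hi]]
  simp only [EuclideanSpace.tmul_apply, schmidtState, PiLp.single_eq_same, one_mul,
    RCLike.inner_apply, PiLp.toLp_apply, mul_assoc, ← Finset.mul_sum, hrow, mul_one]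

end SchmidtState

theorem schmidt_bound_of_werner_overlap_general (d : ℕ)
    (U : Matrix.unitaryGroup (Fin d) ℂ)
    (lam : Fin d → ℝ) (hlam : ∀ i, 0 ≤ lam i) (hsum : ∑ i, lam i = 1)
    (a : ℝ)
    (ha : a = (1 / 4) * ∑ i, ∑ j,
      ‖(Real.sqrt (lam i) : ℂ) * (U : Matrix (Fin d) (Fin d) ℂ) i j
        - (Real.sqrt (lam j) : ℂ) * (U : Matrix (Fin d) (Fin d) ℂ) j i‖ ^ 2)
    (hha : 1 / 2 ≤ a) :
    a ≤ 1 ∧ ∀ i, lam i ≤ 1 / 2 + Real.sqrt (a * (1 - a)) := by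
  set S : EuclideanSpace ℂ (Fin d × Fin d) ≃ₗᵢ[ℂ] _ := EuclideanSpace.swap
  set ψ := schmidtState lam (U : Matrix (Fin d) (Fin d) ℂ)
  have hψ : ‖ψ‖ = 1 := by
    rw [← pow_eq_one_iff_of_nonneg (norm_nonneg _) two_ne_zero, norm_sq_schmidtState hlam U.2,
      hsum]
  have hψa : ‖S.antisymPart ψ‖ ^ 2 = a := by rw [norm_antisymPart_schmidtState_sq, ha]
  have hψs : ‖S.symPart ψ‖ ^ 2 = 1 - a := by
    rw [← hψa, ← one_pow 2, ← hψ,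
      ← S.norm_antisymPart_sq_add_norm_symPart_sq EuclideanSpace.swap_involutive ψ]
    ring
  refine ⟨by nlinarith [sq_nonneg ‖S.symPart ψ‖], fun k => ?_⟩
  set v := EuclideanSpace.tmul (EuclideanSpace.single k 1) (WithLp.toLp 2 (U k))
  have hv : ‖v‖ = 1 := by
    rw [EuclideanSpace.norm_tmul, PiLp.norm_single, norm_one, one_mul,
      ← pow_eq_one_iff_of_nonneg (norm_nonneg _) two_ne_zero, EuclideanSpace.norm_sq_eq]
    exact Matrix.sum_norm_sq_row_of_mem_unitaryGroup U.2 k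
  have hv' : ‖S.antisymPart v‖ ^ 2 ≤ 1 / 2 := by
    calc ‖S.antisymPart v‖ ^ 2 ≤ ‖v‖ ^ 2 / 2 := EuclideanSpace.norm_antisymPart_tmul_sq_le _ _
      _ = 1 / 2 := by rw [hv, one_pow]
  have key := S.norm_inner_sq_le_half_add EuclideanSpace.swap_involutive hv hψ hv' (hψa ▸ hha)
  rw [inner_tmul_single_row_schmidtState U.2, Complex.norm_real, Real.norm_eq_abs, sq_abs,
    Real.sq_sqrt (hlam k)] at key
  rwa [← hψs, ← hψa, ← mul_pow, Real.sqrt_sq (by positivity)]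

/-- For a `d × d` unitary `U` and a probability vector `λ`, with
`a = (1/4) ∑ᵢⱼ |√λᵢ Uᵢⱼ − √λⱼ Uⱼᵢ|²`: if `1/2 ≤ a` then `a ≤ 1` and every entry of `λ`
is at most `1/2 + √(a(1−a))`. -/
theorem schmidt_bound_of_werner_overlap (d : ℕ) (hd : 2 ≤ d)
    (U : Matrix.unitaryGroup (Fin d) ℂ)
    (lam : Fin d → ℝ) (hlam : ∀ i, 0 ≤ lam i) (hsum : ∑ i, lam i = 1)
    (a : ℝ)
    (ha : a = (1 / 4) * ∑ i, ∑ j,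
      ‖(Real.sqrt (lam i) : ℂ) * (U : Matrix (Fin d) (Fin d) ℂ) i j
        - (Real.sqrt (lam j) : ℂ) * (U : Matrix (Fin d) (Fin d) ℂ) j i‖ ^ 2)
    (hha : 1 / 2 ≤ a) :
    a ≤ 1 ∧ ∀ i, lam i ≤ 1 / 2 + Real.sqrt (a * (1 - a)) :=
  schmidt_bound_of_werner_overlap_general d U lam hlam hsum a ha hha
end

section
/- The function f : ℝ → ℝ defined by f(a) = 0 for a ≤ 1/2 and f(a) = 1/2 − √(a(1−a)) for a > 1/2 is convex on the interval [0, 1]. -/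
open Set

/-- `√(a(1-a))` is concave on `[1/2, 1]`. -/
lemma concaveOn_sqrt_aux :
    ConcaveOn ℝ (Icc (1/2 : ℝ) 1) (fun a : ℝ => Real.sqrt (a * (1 - a))) := by
  refine ⟨convex_Icc _ _, ?_⟩
  rintro x ⟨hx1, hx2⟩ y ⟨hy1, hy2⟩ μ ν hμ hν hμν
  simp only [smul_eq_mul]
  set s := Real.sqrt (x * (1 - x)) with hsdef
  set t := Real.sqrt (y * (1 - y)) with htdef
  have hs0 : 0 ≤ s := Real.sqrt_nonneg _
  have ht0 : 0 ≤ t := Real.sqrt_nonneg _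
  have hs : s ^ 2 = x * (1 - x) := Real.sq_sqrt (by nlinarith)
  have ht : t ^ 2 = y * (1 - y) := Real.sq_sqrt (by nlinarith)
  have hlhs : 0 ≤ μ * s + ν * t := by positivity
  have hzl : (0:ℝ) ≤ μ * x + ν * y :=
    add_nonneg (mul_nonneg hμ (by linarith)) (mul_nonneg hν (by linarith))
  have hzu : μ * x + ν * y ≤ 1 := by
    nlinarith [mul_le_mul_of_nonneg_left hx2 hμ, mul_le_mul_of_nonneg_left hy2 hν]
  have hz : (0:ℝ) ≤ (μ * x + ν * y) * (1 - (μ * x + ν * y)) :=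
    mul_nonneg hzl (by linarith)
  refine (Real.le_sqrt hlhs hz).mpr ?_
  have hst2 : (s * t) ^ 2 = (x * (1 - y)) * (y * (1 - x)) := by
    rw [mul_pow, hs, ht]; ring
  have key : 2 * (s * t) ≤ x * (1 - y) + y * (1 - x) := by
    nlinarith [sq_nonneg (x * (1 - y) - y * (1 - x)), mul_nonneg hs0 ht0,
      sq_nonneg (x * (1 - y) + y * (1 - x) - 2 * (s * t)),
      mul_nonneg (mul_nonneg (by linarith : (0:ℝ) ≤ x) (by linarith : (0:ℝ) ≤ y))
        (mul_nonneg (by linarith : (0:ℝ) ≤ 1 - y) (by linarith : (0:ℝ) ≤ 1 - x))]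
  have expand : (μ * x + ν * y) * (1 - (μ * x + ν * y)) =
      μ^2 * (x * (1 - x)) + ν^2 * (y * (1 - y)) + μ * ν * (x * (1 - y) + y * (1 - x)) := by
    have hν' : ν = 1 - μ := by linarith
    rw [hν']; ring
  nlinarith [expand, mul_le_mul_of_nonneg_left key (mul_nonneg hμ hν), sq_nonneg μ, sq_nonneg ν]

/-- `a ↦ 1/2 - √(a(1-a))` is monotone on `[1/2, 1]`. -/
lemma monotoneOn_aux :
    MonotoneOn (fun a : ℝ => 1/2 - Real.sqrt (a * (1 - a))) (Icc (1/2 : ℝ) 1) := by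
  rintro x ⟨hx1, hx2⟩ y ⟨hy1, hy2⟩ hxy
  simp only
  have h : y * (1 - y) ≤ x * (1 - x) := by nlinarith
  have := Real.sqrt_le_sqrt h
  linarith

lemma image_max_aux : (fun a : ℝ => max a (1/2)) '' Icc (0:ℝ) 1 = Icc (1/2 : ℝ) 1 := by
  ext z
  constructor
  · rintro ⟨a, ⟨ha0, ha1⟩, rfl⟩
    exact ⟨le_max_right _ _, max_le ha1 (by norm_num)⟩
  · rintro ⟨hz1, hz2⟩
    exact ⟨z, ⟨by linarith, hz2⟩, max_eq_left hz1⟩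

/-- The convex roof of the first Vidal monotone on Werner states,
`a ↦ 0` for `a ≤ 1/2` and `a ↦ 1/2 − √(a(1−a))` for `a > 1/2`, is convex on `[0,1]`. -/
theorem convexOn_vidal_one_werner :
    ConvexOn ℝ (Set.Icc (0 : ℝ) 1)
      (fun a : ℝ => if a ≤ 1 / 2 then 0 else 1 / 2 - Real.sqrt (a * (1 - a))) := by
  have houter : ConvexOn ℝ (Icc (1/2 : ℝ) 1) (fun a : ℝ => 1/2 - Real.sqrt (a * (1 - a))) := by
    have := (convexOn_const (1/2 : ℝ) (convex_Icc (1/2 : ℝ) 1)).sub concaveOn_sqrt_aux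
    simpa [Pi.sub_def] using this
  have hinner : ConvexOn ℝ (Icc (0:ℝ) 1) (fun a : ℝ => max a (1/2)) := by
    have := ((convexOn_id (convex_Icc (0:ℝ) 1)) : ConvexOn ℝ _ _).sup (convexOn_const (1/2 : ℝ) (convex_Icc (0:ℝ) 1))
    simpa [Pi.sup_def] using this
  have hcomp : ConvexOn ℝ (Icc (0:ℝ) 1)
      ((fun a : ℝ => 1/2 - Real.sqrt (a * (1 - a))) ∘ (fun a : ℝ => max a (1/2))) := by
    refine ConvexOn.comp ?_ hinner ?_
    · rw [image_max_aux]; exact houter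
    · rw [image_max_aux]; exact monotoneOn_aux
  have heq : (fun a : ℝ => if a ≤ 1 / 2 then 0 else 1 / 2 - Real.sqrt (a * (1 - a))) =
      ((fun a : ℝ => 1/2 - Real.sqrt (a * (1 - a))) ∘ (fun a : ℝ => max a (1/2))) := by
    funext a
    by_cases h : a ≤ 1/2
    · simp only [Function.comp, if_pos h, max_eq_right h]
      rw [show (1/2 : ℝ) * (1 - 1/2) = (1/2)^2 by norm_num, Real.sqrt_sq (by norm_num)]
      norm_num
    · simp only [Function.comp, if_neg h, max_eq_left (le_of_not_ge h)]
  rw [heq]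
  exact hcomp
end

section
/- The function a ↦ h(1/2 − √(a(1−a))), where h(t) = −t·log t − (1−t)·log(1−t) is the binary entropy function, is convex on the interval [1/2, 1]. -/
/-!
Write `σ a = √(a (1 - a))` and `L a = log (1/2 + σ a) - log (1/2 - σ a)`. On `(1/2, 1)` the
function has derivative `L a · (2a - 1) / (2 σ a)`, and because `(1/2 + σ)(1/2 - σ) = (a - 1/2)²`
and `4 σ² + (2a - 1)² = 1` its second derivative collapses to `(L a - 4 σ a) / (4 σ a ^ 3)`.
This is nonnegative since `log (1 + u) - log (1 - u) = 2 (u + u³/3 + u⁵/5 + ⋯) ≥ 2u` for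
`0 ≤ u < 1`, applied at `u = 2 σ a`.
-/

open Real Set

theorem two_mul_le_log_one_add_sub_log_one_sub {u : ℝ} (h₀ : 0 ≤ u) (h₁ : u < 1) :
    2 * u ≤ log (1 + u) - log (1 - u) := by
  have hsum := hasSum_log_sub_log_of_abs_lt_one (abs_lt.2 ⟨by linarith, h₁⟩)
  simpa using le_hasSum hsum 0 fun k _ => by positivity

noncomputable def sqrtMulOneSub (a : ℝ) : ℝ := √(a * (1 - a))

section sqrtMulOneSub

local notation "σ" => sqrtMulOneSub

variable {a : ℝ}

lemma sqrtMulOneSub_pos (ha : a ∈ Ioo 0 1) : 0 < σ a :=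
  sqrt_pos.2 (mul_pos ha.1 (sub_pos.2 ha.2))

lemma sqrtMulOneSub_lt_half (ha : a ≠ 1 / 2) : σ a < 1 / 2 :=
  (sqrt_lt' (by norm_num)).2 (by nlinarith [sq_pos_of_ne_zero (sub_ne_zero.2 ha)])

lemma sq_sqrtMulOneSub (ha : a ∈ Icc 0 1) : σ a ^ 2 = a * (1 - a) :=
  sq_sqrt (mul_nonneg ha.1 (sub_nonneg.2 ha.2))

lemma hasDerivAt_sqrtMulOneSub (h₀ : a ≠ 0) (h₁ : a ≠ 1) :
    HasDerivAt σ ((1 - 2 * a) / (2 * σ a)) a :=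
  (((hasDerivAt_id a).mul ((hasDerivAt_const a 1).sub (hasDerivAt_id a))).sqrt
    (mul_ne_zero h₀ (sub_ne_zero.2 h₁.symm))).congr_deriv (by
      simp only [sqrtMulOneSub, Pi.mul_apply, Pi.sub_apply, id_eq]; ring)

lemma hasDerivAt_binEntropy_half_sub_sqrtMulOneSub (ha : a ∈ Ioo 0 1) (ha' : a ≠ 1 / 2) :
    HasDerivAt (fun x => binEntropy (1 / 2 - σ x))
      ((log (1 / 2 + σ a) - log (1 / 2 - σ a)) * ((2 * a - 1) / (2 * σ a))) a := by
  have hs := sqrtMulOneSub_pos ha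
  have hs' := sqrtMulOneSub_lt_half ha'
  refine ((hasDerivAt_binEntropy (p := 1 / 2 - σ a) (by linarith) (by linarith)).comp a
    ((hasDerivAt_sqrtMulOneSub ha.1.ne' ha.2.ne).const_sub (1 / 2))).congr_deriv ?_
  rw [show 1 - (1 / 2 - σ a) = 1 / 2 + σ a by ring]
  ring

lemma hasDerivAt_log_half_add_sub_log_half_sub (ha : a ∈ Ioo 0 1) (ha' : a ≠ 1 / 2) :
    HasDerivAt (fun x => log (1 / 2 + σ x) - log (1 / 2 - σ x)) (-2 / ((2 * a - 1) * σ a)) a := by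
  have hs := sqrtMulOneSub_pos ha
  have hs' := sqrtMulOneSub_lt_half ha'
  have hσ := hasDerivAt_sqrtMulOneSub ha.1.ne' ha.2.ne
  refine (((hσ.const_add (1 / 2)).log (by linarith)).sub
    ((hσ.const_sub (1 / 2)).log (by linarith))).congr_deriv ?_
  have hprod : (1 / 2 + σ a) * (1 / 2 - σ a) = (2 * a - 1) ^ 2 / 4 := by
    linear_combination -sq_sqrtMulOneSub (Ioo_subset_Icc_self ha)
  have h2a : 2 * a - 1 ≠ 0 := fun h => ha' (by linarith)
  have hplus : 1 / 2 + σ a ≠ 0 := by linarith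
  have hminus : 1 / 2 - σ a ≠ 0 := by linarith
  rw [div_sub_div _ _ hplus hminus, hprod]
  field_simp
  ring

lemma hasDerivAt_two_mul_sub_one_div_sqrtMulOneSub (ha : a ∈ Ioo 0 1) :
    HasDerivAt (fun x => (2 * x - 1) / (2 * σ x)) (1 / (4 * σ a ^ 3)) a := by
  have hs := sqrtMulOneSub_pos ha
  refine ((((hasDerivAt_id a).const_mul 2).sub_const 1).div
    ((hasDerivAt_sqrtMulOneSub ha.1.ne' ha.2.ne).const_mul 2) (by positivity)).congr_deriv ?_
  simp only [id_eq]
  field_simp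
  linear_combination 16 * sq_sqrtMulOneSub (Ioo_subset_Icc_self ha)

lemma hasDerivAt_log_half_add_sub_log_half_sub_mul_div (ha : a ∈ Ioo 0 1) (ha' : a ≠ 1 / 2) :
    HasDerivAt (fun x => (log (1 / 2 + σ x) - log (1 / 2 - σ x)) * ((2 * x - 1) / (2 * σ x)))
      ((log (1 / 2 + σ a) - log (1 / 2 - σ a) - 4 * σ a) / (4 * σ a ^ 3)) a := by
  have hs := (sqrtMulOneSub_pos ha).ne'
  have h2a : 2 * a - 1 ≠ 0 := fun h => ha' (by linarith)
  refine ((hasDerivAt_log_half_add_sub_log_half_sub ha ha').mul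
    (hasDerivAt_two_mul_sub_one_div_sqrtMulOneSub ha)).congr_deriv ?_
  field_simp
  ring

lemma four_mul_sqrtMulOneSub_le_log_half_add_sub_log_half_sub (ha : a ≠ 1 / 2) :
    4 * σ a ≤ log (1 / 2 + σ a) - log (1 / 2 - σ a) := by
  have hs := sqrtMulOneSub_lt_half ha
  have hs₀ : 0 ≤ σ a := sqrt_nonneg _
  have hlog := two_mul_le_log_one_add_sub_log_one_sub (u := 2 * σ a) (by positivity) (by linarith)
  rw [show 1 / 2 + σ a = (1 + 2 * σ a) / 2 by ring, show 1 / 2 - σ a = (1 - 2 * σ a) / 2 by ring,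
    log_div (by linarith) two_ne_zero, log_div (by linarith) two_ne_zero]
  linarith

end sqrtMulOneSub

/-- The entanglement of formation of Werner states,
`a ↦ h(1/2 − √(a(1−a)))` with `h` the binary entropy, is convex on `[1/2, 1]`. -/
theorem convexOn_entanglement_of_formation_werner :
    ConvexOn ℝ (Set.Icc (1 / 2 : ℝ) 1)
      (fun a : ℝ => Real.binEntropy (1 / 2 - Real.sqrt (a * (1 - a)))) := by
  have hmem : ∀ a ∈ interior (Icc (1 / 2 : ℝ) 1), a ∈ Ioo 0 1 ∧ a ≠ 1 / 2 := by
    rw [interior_Icc]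
    exact fun a ha => ⟨⟨by linarith [ha.1], ha.2⟩, ha.1.ne'⟩
  refine convexOn_of_hasDerivWithinAt2_nonneg (convex_Icc _ _)
    (binEntropy_continuous.comp (by fun_prop)).continuousOn
    (fun a ha => (hasDerivAt_binEntropy_half_sub_sqrtMulOneSub (hmem a ha).1
      (hmem a ha).2).hasDerivWithinAt)
    (fun a ha => (hasDerivAt_log_half_add_sub_log_half_sub_mul_div (hmem a ha).1
      (hmem a ha).2).hasDerivWithinAt) fun a ha => ?_
  have hs := sqrtMulOneSub_pos (hmem a ha).1
  exact div_nonneg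
    (sub_nonneg.2 (four_mul_sqrtMulOneSub_le_log_half_add_sub_log_half_sub (hmem a ha).2))
    (by positivity)
end

section
/- Let d ≥ 2 and let λ : Fin d → ℝ be a probability vector (λᵢ ≥ 0, Σᵢ λᵢ = 1) whose entries are in decreasing order (λ is antitone). Let β be a real number with 1/d ≤ β ≤ (1/d)(Σᵢ √λᵢ)². Then there exists p ∈ [0, 1] such that the vector λ' defined by λ'ᵢ = (1−p)·λᵢ + (if i = 0 then p else 0) satisfies Σᵢ √(λ'ᵢ) = √(d·β) and, for every m ≤ d, Σ_{i < m} λᵢ ≤ Σ_{i < m} λ'ᵢ (so λ' majorizes λ; note λ' is again a decreasing probability vector). -/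
open scoped BigOperators

/-- Given a decreasing probability vector `λ` and `β` with
`1/d ≤ β ≤ (1/d)(∑ᵢ √λᵢ)²`, mixing `λ` with the vector `(1,0,…,0)` produces a vector
`λ'ᵢ = (1−p)λᵢ + p·δ_{i0}` that majorizes `λ` and satisfies `∑ᵢ √λ'ᵢ = √(dβ)`. -/
theorem exists_majorizing_vector_with_overlap (d : ℕ) (hd : 2 ≤ d)
    (lam : Fin d → ℝ) (hlam : ∀ i, 0 ≤ lam i) (hsum : ∑ i, lam i = 1)
    (hmono : Antitone lam)
    (β : ℝ) (hβ1 : 1 / (d : ℝ) ≤ β)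
    (hβ2 : β ≤ (1 / (d : ℝ)) * (∑ i, Real.sqrt (lam i)) ^ 2) :
    ∃ p ∈ Set.Icc (0 : ℝ) 1,
      (∑ i, Real.sqrt ((1 - p) * lam i + if (i : ℕ) = 0 then p else 0)
        = Real.sqrt (d * β)) ∧
      ∀ m : ℕ, m ≤ d →
        ∑ i ∈ Finset.univ.filter (fun i : Fin d => (i : ℕ) < m), lam i ≤
        ∑ i ∈ Finset.univ.filter (fun i : Fin d => (i : ℕ) < m),
          ((1 - p) * lam i + if (i : ℕ) = 0 then p else 0) := by
  have hd0 : (0 : ℝ) < d := by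
    have : (2:ℝ) ≤ d := by exact_mod_cast hd
    linarith
  have hdpos : 0 < d := by omega
  set f : ℝ → ℝ := fun p =>
    ∑ i, Real.sqrt ((1 - p) * lam i + if (i : ℕ) = 0 then p else 0) with hf
  have hcont : ContinuousOn f (Set.Icc 0 1) := by
    apply continuousOn_finset_sum
    intro i _
    apply Continuous.continuousOn
    apply Real.continuous_sqrt.comp
    rcases eq_or_ne ((i:ℕ)) 0 with h | h <;> simp [h] <;> fun_prop
  have hS0 : 0 ≤ ∑ i, Real.sqrt (lam i) :=
    Finset.sum_nonneg fun i _ => Real.sqrt_nonneg _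
  have hf0 : f 0 = ∑ i, Real.sqrt (lam i) := by
    simp [hf]
  have hf1 : f 1 = 1 := by
    have key : ∀ i : Fin d,
        Real.sqrt ((1 - 1) * lam i + if (i : ℕ) = 0 then (1:ℝ) else 0)
          = if i = (⟨0, hdpos⟩ : Fin d) then 1 else 0 := by
      intro i
      by_cases h : (i : ℕ) = 0
      · have : i = (⟨0, hdpos⟩ : Fin d) := by ext; simp [h]
        simp [this]
      · have : i ≠ (⟨0, hdpos⟩ : Fin d) := by
          intro hc; apply h; rw [hc]
        simp [h, this]
    simp only [hf, key]
    simp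
  have hlo : 1 ≤ Real.sqrt (d * β) := by
    rw [show (1:ℝ) = Real.sqrt 1 by simp]
    apply Real.sqrt_le_sqrt
    rw [div_le_iff₀ hd0] at hβ1
    linarith
  have hhi : Real.sqrt (d * β) ≤ ∑ i, Real.sqrt (lam i) := by
    have h : d * β ≤ (∑ i, Real.sqrt (lam i)) ^ 2 := by
      rw [one_div] at hβ2
      calc d * β ≤ d * ((d:ℝ)⁻¹ * (∑ i, Real.sqrt (lam i)) ^ 2) := by
            apply mul_le_mul_of_nonneg_left hβ2 hd0.le
        _ = (∑ i, Real.sqrt (lam i)) ^ 2 := by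
            field_simp
    calc Real.sqrt (d * β) ≤ Real.sqrt ((∑ i, Real.sqrt (lam i)) ^ 2) :=
          Real.sqrt_le_sqrt h
      _ = ∑ i, Real.sqrt (lam i) := Real.sqrt_sq hS0
  have hmem : Real.sqrt (d * β) ∈ Set.Icc (f 1) (f 0) := by
    rw [hf0, hf1]; exact ⟨hlo, hhi⟩
  obtain ⟨p, hp, hfp⟩ :=
    intermediate_value_Icc' (by norm_num : (0:ℝ) ≤ 1) hcont hmem
  refine ⟨p, hp, hfp, ?_⟩
  intro m hm
  rw [← sub_nonneg, ← Finset.sum_sub_distrib]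
  have hterm : ∀ i : Fin d,
      ((1 - p) * lam i + if (i : ℕ) = 0 then p else 0) - lam i
        = (if (i : ℕ) = 0 then p else 0) - p * lam i := by
    intro i; split <;> ring
  simp only [hterm]
  rw [Finset.sum_sub_distrib]
  rcases Nat.eq_zero_or_pos m with hm0 | hm1
  · subst hm0; simp
  · have h0mem : (⟨0, hdpos⟩ : Fin d) ∈
        Finset.univ.filter (fun i : Fin d => (i : ℕ) < m) := by
      simp [hm1]
    have hsum_ite : ∑ i ∈ Finset.univ.filter (fun i : Fin d => (i : ℕ) < m),
        (if (i : ℕ) = 0 then p else 0) = p := by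
      rw [Finset.sum_eq_single (⟨0, hdpos⟩ : Fin d)]
      · simp
      · intro b _ hb
        have : (b : ℕ) ≠ 0 := by
          intro hc; apply hb; ext; simp [hc]
        simp [this]
      · intro h; exact absurd h0mem h
    rw [hsum_ite, ← Finset.mul_sum, sub_nonneg]
    have hsle : ∑ i ∈ Finset.univ.filter (fun i : Fin d => (i : ℕ) < m), lam i
        ≤ ∑ i, lam i := by
      apply Finset.sum_le_sum_of_subset_of_nonneg (Finset.filter_subset _ _)
      intro i _ _; exact hlam i
    rw [hsum] at hsle
    calc p * (∑ i ∈ Finset.univ.filter (fun i : Fin d => (i : ℕ) < m), lam i)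
        ≤ p * 1 := mul_le_mul_of_nonneg_left hsle hp.1
      _ = p := mul_one p
end

section
/- Let d ≥ 2, let k be an integer with 1 ≤ k ≤ d, and let β be a real number with 1/d ≤ β ≤ k/d. Then there exists a probability vector λ : Fin d → ℝ (λᵢ ≥ 0, Σᵢ λᵢ = 1) with at most k nonzero entries such that Σᵢ √λᵢ = √(d·β). -/
/-!
Put `λ(t) = (1 - t) δᵢ + t uₛ` with `δᵢ` a point mass and `uₛ` the uniform distribution on a
`k`-element set `s ∋ i`. Every `λ(t)` is a probability vector supported on `s`, and `∑ᵢ √λᵢ(t)`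
moves continuously from `1` at `t = 0` to `√k` at `t = 1`; since `1 ≤ √(dβ) ≤ √k`, the
intermediate value theorem provides the required `t`.
-/

open Finset Function

variable {ι : Type*}

theorem support_subset_of_mem_segment {𝕜 M : Type*} [Semiring 𝕜] [PartialOrder 𝕜]
    [AddCommMonoid M] [Module 𝕜 M] {p q r : ι → M} (hr : r ∈ segment 𝕜 p q) :
    support r ⊆ support p ∪ support q := by
  obtain ⟨a, b, -, -, -, rfl⟩ := hr
  exact (support_add _ _).trans <|
    Set.union_subset_union (support_const_smul_subset a p) (support_const_smul_subset b q)

noncomputable def uniformProbVec (s : Finset ι) : ι → ℝ :=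
  (s : Set ι).indicator fun _ => (#s : ℝ)⁻¹

theorem support_uniformProbVec_subset (s : Finset ι) : support (uniformProbVec s) ⊆ s :=
  Set.support_indicator_subset

variable [Fintype ι]

theorem uniformProbVec_mem_stdSimplex {s : Finset ι} (hs : s.Nonempty) :
    uniformProbVec s ∈ stdSimplex ℝ ι := by
  refine ⟨fun i => Set.indicator_nonneg (fun _ _ => by positivity) i, ?_⟩
  rw [uniformProbVec, sum_indicator_subset _ (subset_univ s), sum_const, nsmul_eq_mul,
    mul_inv_cancel₀ (by exact_mod_cast hs.card_ne_zero)]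

theorem sum_sqrt_uniformProbVec (s : Finset ι) : ∑ i, √(uniformProbVec s i) = √(#s : ℝ) := by
  have hsqrt : (fun i => √(uniformProbVec s i)) = (s : Set ι).indicator fun _ => √((#s : ℝ)⁻¹) :=
    (Set.indicator_comp_of_zero (g := Real.sqrt) Real.sqrt_zero).symm
  rw [hsqrt, sum_indicator_subset _ (subset_univ s), sum_const, nsmul_eq_mul, Real.sqrt_inv,
    ← div_eq_mul_inv, Real.div_sqrt]

theorem sum_sqrt_single [DecidableEq ι] (i₀ : ι) : ∑ i, √((Pi.single i₀ 1 : ι → ℝ) i) = 1 := by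
  simp [Pi.single_apply, apply_ite Real.sqrt]

theorem exists_probVec_rank_le_with_overlap_general (d k : ℕ)
    (hk1 : 1 ≤ k) (hk2 : k ≤ d)
    (β : ℝ) (hβ1 : 1 / (d : ℝ) ≤ β) (hβ2 : β ≤ (k : ℝ) / d) :
    ∃ lam : Fin d → ℝ, (∀ i, 0 ≤ lam i) ∧ (∑ i, lam i = 1) ∧
      (Finset.univ.filter (fun i : Fin d => lam i ≠ 0)).card ≤ k ∧
      ∑ i, Real.sqrt (lam i) = Real.sqrt (d * β) := by
  obtain ⟨s, -, hs⟩ := exists_subset_card_eq (s := (univ : Finset (Fin d))) (by simpa using hk2)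
  obtain ⟨i₀, hi₀⟩ : s.Nonempty := card_pos.1 (hs ▸ hk1)
  have hd : (0 : ℝ) < d := by exact_mod_cast hk1.trans hk2
  have hc : √(d * β) ∈
      Set.Icc (∑ i, √((Pi.single i₀ 1 : Fin d → ℝ) i)) (∑ i, √(uniformProbVec s i)) := by
    rw [sum_sqrt_single, sum_sqrt_uniformProbVec, hs]
    exact ⟨Real.one_le_sqrt.2 ((div_le_iff₀' hd).1 hβ1),
      Real.sqrt_le_sqrt ((le_div_iff₀' hd).1 hβ2)⟩
  obtain ⟨lam, hseg, hsum⟩ := (convex_segment _ _).isPreconnected.intermediate_value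
    (left_mem_segment ℝ _ _) (right_mem_segment ℝ _ _)
    (by fun_prop : Continuous fun p : Fin d → ℝ => ∑ i, √(p i)).continuousOn hc
  have hprob := (convex_stdSimplex ℝ (Fin d)).segment_subset (single_mem_stdSimplex ℝ i₀)
    (uniformProbVec_mem_stdSimplex ⟨i₀, hi₀⟩) hseg
  have hsupp : support lam ⊆ s := (support_subset_of_mem_segment hseg).trans <|
    Set.union_subset (Pi.support_single_subset.trans (Set.singleton_subset_iff.2 hi₀))
      (support_uniformProbVec_subset s)
  refine ⟨lam, hprob.1, hprob.2, ?_, hsum⟩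
  calc #{i | lam i ≠ 0} ≤ #s := card_le_card fun i hi => hsupp (by simpa using hi)
    _ = k := hs

/-- For `1 ≤ k ≤ d` and `1/d ≤ β ≤ k/d`, there is a probability vector on `Fin d`
with at most `k` nonzero entries whose square roots sum to `√(dβ)`. -/
theorem exists_probVec_rank_le_with_overlap (d k : ℕ) (hd : 2 ≤ d)
    (hk1 : 1 ≤ k) (hk2 : k ≤ d)
    (β : ℝ) (hβ1 : 1 / (d : ℝ) ≤ β) (hβ2 : β ≤ (k : ℝ) / d) :
    ∃ lam : Fin d → ℝ, (∀ i, 0 ≤ lam i) ∧ (∑ i, lam i = 1) ∧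
      (Finset.univ.filter (fun i : Fin d => lam i ≠ 0)).card ≤ k ∧
      ∑ i, Real.sqrt (lam i) = Real.sqrt (d * β) :=
  exists_probVec_rank_le_with_overlap_general d k hk1 hk2 β hβ1 hβ2
end

section
/- Let d ≥ 2, let k be an integer with 1 ≤ k ≤ d−1, and let β ∈ [k/d, 1]. Let λ : Fin d → ℝ be a probability vector (λᵢ ≥ 0, Σᵢ λᵢ = 1) in decreasing order (antitone) satisfying Σᵢ √λᵢ = √(d·β). Then 1 − Σ_{i < k} λᵢ ≥ (1/d)·(√((1−β)·k) − √(β·(d−k)))². -/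
open scoped BigOperators

set_option maxHeartbeats 1000000 in
private lemma aux_quad (d k β S T : ℝ) (hd : 0 < d) (hk0 : 0 ≤ k) (hkd : k ≤ d)
    (hβ1 : k / d ≤ β) (hβ2 : β ≤ 1) (hS : 0 ≤ S) (hT : 0 ≤ T) (hST : S + T = 1)
    (h : Real.sqrt (d * β) ≤ Real.sqrt (k * S) + Real.sqrt ((d - k) * T)) :
    1 / d * (Real.sqrt ((1 - β) * k) - Real.sqrt (β * (d - k))) ^ 2 ≤ T := by
  have hβ0 : 0 ≤ β := le_trans (by positivity) hβ1
  have hdk0 : 0 ≤ d - k := by linarith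
  have hkdβ : k ≤ d * β := by
    have := (div_le_iff₀ hd).mp hβ1
    linarith
  set r := Real.sqrt (β * (d - k)) with hrdef
  set s := Real.sqrt ((1 - β) * k) with hsdef
  have hr0 : 0 ≤ r := Real.sqrt_nonneg _
  have hs0 : 0 ≤ s := Real.sqrt_nonneg _
  have hr2 : r ^ 2 = β * (d - k) := Real.sq_sqrt (by positivity)
  have hs2 : s ^ 2 = (1 - β) * k := Real.sq_sqrt (by nlinarith)
  have hsr : s ≤ r := by
    apply Real.sqrt_le_sqrt; nlinarith
  have key : (r - s) ^ 2 ≤ d * T := by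
    have hw2 : (Real.sqrt ((d - k) * T)) ^ 2 = (d - k) * T := Real.sq_sqrt (by positivity)
    have hm2 : (Real.sqrt (d * β)) ^ 2 = d * β := Real.sq_sqrt (by positivity)
    rcases le_or_gt (Real.sqrt (d * β)) (Real.sqrt ((d - k) * T)) with hc | hc
    · have h1 : d * β ≤ (d - k) * T := by
        have := pow_le_pow_left₀ (Real.sqrt_nonneg _) hc 2
        rw [hm2, hw2] at this; exact this
      nlinarith [mul_nonneg hβ0 hk0, mul_nonneg hk0 hT]
    · have hA : Real.sqrt (d * β) - Real.sqrt ((d - k) * T) ≤ Real.sqrt (k * S) := by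
        linarith
      have hA0 : 0 ≤ Real.sqrt (d * β) - Real.sqrt ((d - k) * T) := by linarith [hc.le]
      have hsq : (Real.sqrt (d * β) - Real.sqrt ((d - k) * T)) ^ 2 ≤ k * S := by
        calc (Real.sqrt (d * β) - Real.sqrt ((d - k) * T)) ^ 2
            ≤ (Real.sqrt (k * S)) ^ 2 := pow_le_pow_left₀ hA0 hA 2
          _ = k * S := Real.sq_sqrt (by positivity)
      have h2 : d * β + d * T - k ≤
          2 * Real.sqrt (d * β) * Real.sqrt ((d - k) * T) := by
        nlinarith [hsq, hm2, hw2]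
      rcases le_or_gt (d * β + d * T - k) 0 with h3 | h3
      · have hdT0 : d * T = 0 := le_antisymm (by linarith) (by positivity)
        have hrs : r = s := by
          rw [hrdef, hsdef]; congr 1; nlinarith
        rw [hrs]; simpa using hdT0.ge
      · have h4 : (d * β + d * T - k) ^ 2 ≤ 4 * (d * β) * ((d - k) * T) := by
          have h5 := mul_self_le_mul_self h3.le h2
          calc (d * β + d * T - k) ^ 2
              = (d * β + d * T - k) * (d * β + d * T - k) := by ring
            _ ≤ (2 * Real.sqrt (d * β) * Real.sqrt ((d - k) * T)) *
                (2 * Real.sqrt (d * β) * Real.sqrt ((d - k) * T)) := h5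
            _ = 4 * (Real.sqrt (d * β)) ^ 2 * (Real.sqrt ((d - k) * T)) ^ 2 := by ring
            _ = 4 * (d * β) * ((d - k) * T) := by rw [hm2, hw2]
        have hx : (d * T + r ^ 2 - s ^ 2) ^ 2 ≤ 4 * r ^ 2 * (d * T) := by
          have e1 : d * T + r ^ 2 - s ^ 2 = d * β + d * T - k := by
            rw [hr2, hs2]; ring
          have e2 : 4 * r ^ 2 * (d * T) = 4 * (d * β) * ((d - k) * T) := by
            rw [hr2]; ring
          rw [e1, e2]; exact h4
        nlinarith [hx, mul_nonneg hr0 hs0]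
  have hring : (s - r) ^ 2 = (r - s) ^ 2 := by ring
  calc 1 / d * (s - r) ^ 2 = (r - s) ^ 2 / d := by rw [hring]; ring
    _ ≤ T := by rw [div_le_iff₀ hd]; linarith [key]

/-- Lower bound on the `k`-th Vidal monotone over Schmidt vectors with fixed overlap
`β` with the maximally entangled state: for a decreasing probability vector `λ` with
`∑ᵢ √λᵢ = √(dβ)` and `β ∈ [k/d, 1]`,
`1 − ∑_{i<k} λᵢ ≥ (1/d)(√((1−β)k) − √(β(d−k)))²`. -/
theorem vidal_monotone_lower_bound_iso (d k : ℕ) (hd : 2 ≤ d)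
    (hk1 : 1 ≤ k) (hk2 : k ≤ d - 1)
    (β : ℝ) (hβ1 : (k : ℝ) / d ≤ β) (hβ2 : β ≤ 1)
    (lam : Fin d → ℝ) (hlam : ∀ i, 0 ≤ lam i) (hsum : ∑ i, lam i = 1)
    (hmono : Antitone lam)
    (hs : ∑ i, Real.sqrt (lam i) = Real.sqrt (d * β)) :
    1 - ∑ i ∈ Finset.univ.filter (fun i : Fin d => (i : ℕ) < k), lam i ≥
      (1 / (d : ℝ)) *
        (Real.sqrt ((1 - β) * k) - Real.sqrt (β * ((d : ℝ) - k))) ^ 2 := by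
  have hkd : k ≤ d := le_trans hk2 (Nat.sub_le d 1)
  set F := Finset.univ.filter (fun i : Fin d => (i : ℕ) < k) with hF
  have hFmap : F = Finset.map (Fin.castLEEmb hkd) Finset.univ := by
    ext i
    simp only [hF, Finset.mem_filter, Finset.mem_univ, true_and, Finset.mem_map,
      Fin.castLEEmb_apply]
    constructor
    · intro hi; exact ⟨⟨(i : ℕ), hi⟩, by ext; simp⟩
    · rintro ⟨a, rfl⟩; exact a.isLt
  have hcard : F.card = k := by
    rw [hFmap, Finset.card_map, Finset.card_univ, Fintype.card_fin]
  have hcardc : Fᶜ.card = d - k := by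
    rw [Finset.card_compl, hcard, Fintype.card_fin]
  set S := ∑ i ∈ F, lam i with hSdef
  set T := ∑ i ∈ Fᶜ, lam i with hTdef
  have hS0 : 0 ≤ S := Finset.sum_nonneg fun i _ => hlam i
  have hT0 : 0 ≤ T := Finset.sum_nonneg fun i _ => hlam i
  have hST : S + T = 1 := by
    rw [hSdef, hTdef, Finset.sum_add_sum_compl, hsum]
  -- Cauchy-Schwarz
  have cs : ∀ G : Finset (Fin d),
      ∑ i ∈ G, Real.sqrt (lam i) ≤ Real.sqrt ((G.card : ℝ) * ∑ i ∈ G, lam i) := by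
    intro G
    have h1 := Finset.sum_mul_sq_le_sq_mul_sq G (fun _ => (1 : ℝ))
      (fun i => Real.sqrt (lam i))
    simp only [one_mul, one_pow, Finset.sum_const, nsmul_eq_mul, mul_one] at h1
    have h2 : ∀ i ∈ G, Real.sqrt (lam i) ^ 2 = lam i := fun i _ => Real.sq_sqrt (hlam i)
    rw [Finset.sum_congr rfl h2] at h1
    exact Real.le_sqrt_of_sq_le h1
  have hd0 : (0 : ℝ) < d := by positivity
  have hineq : Real.sqrt (d * β) ≤ Real.sqrt ((k : ℝ) * S) + Real.sqrt (((d : ℝ) - k) * T) := by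
    have hcast : ((d - k : ℕ) : ℝ) = (d : ℝ) - k := by
      rw [Nat.cast_sub hkd]
    calc Real.sqrt (d * β) = ∑ i ∈ F, Real.sqrt (lam i) + ∑ i ∈ Fᶜ, Real.sqrt (lam i) := by
          rw [Finset.sum_add_sum_compl, hs]
      _ ≤ Real.sqrt ((k : ℝ) * S) + Real.sqrt (((d : ℝ) - k) * T) := by
          have c1 := cs F
          have c2 := cs Fᶜ
          rw [hcard] at c1
          rw [hcardc, hcast] at c2
          exact add_le_add c1 c2
  have hk0 : (0 : ℝ) ≤ k := by positivity
  have hkdR : (k : ℝ) ≤ d := by exact_mod_cast hkd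
  have := aux_quad d k β S T hd0 hk0 hkdR hβ1 hβ2 hS0 hT0 hST hineq
  have hT1 : T = 1 - S := by linarith
  rw [ge_iff_le]
  linarith [this]
end

section
/- Let d ≥ 2, let k be an integer with 1 ≤ k ≤ d−1, and let β ∈ [k/d, 1]. Set t := 1/k − (1/(k·d))·(√((1−β)·k) − √(β·(d−k)))², and define λ : Fin d → ℝ by λᵢ = t for i < k and λᵢ = (1−k·t)/(d−k) for i ≥ k. Then 0 ≤ (1−k·t)/(d−k) ≤ t (so λ is a decreasing probability vector) and Σᵢ √λᵢ = √(d·β). Consequently 1 − Σ_{i<k} λᵢ = (1/d)·(√((1−β)·k) − √(β·(d−k)))², so the bound on the k-th Vidal monotone among Schmidt vectors with Σᵢ √λᵢ = √(dβ) is attained. -/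
/-!
Write `u = √β`, `v = √(1 - β)`, `p = √k`, `q = √(d - k)`. Then `√((1 - β) k) - √(β (d - k)) = v p - u q`,
and the two-squares identity `(v p - u q)² + (v q + u p)² = (u² + v²)(p² + q²) = d` gives
`t = (v q + u p)² / (k d)`, while `s = (1 - k t) / (d - k)` is `(u q - v p)² / (d (d - k))`. The hypothesis
`β ≥ k / d` is exactly `u q ≥ v p`, so the square roots are `(v q + u p) / (p √d)` and
`(u q - v p) / (q √d)`, and `k √t + (d - k) √s = u (p² + q²) / √d = √(d β)`.
-/

open Finset Real

theorem Fin.sum_ite_val_lt {M : Type*} [AddCommMonoid M] {n m : ℕ} (hmn : m ≤ n) (a b : M) :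
    ∑ i : Fin n, (if (i : ℕ) < m then a else b) = m • a + (n - m) • b := by
  have hcard := card_filter_add_card_filter_not (s := univ) fun i : Fin n => (i : ℕ) < m
  rw [card_filter_val_lt, min_eq_right hmn, card_univ, Fintype.card_fin] at hcard
  rw [sum_ite, Finset.sum_const, Finset.sum_const, card_filter_val_lt, min_eq_right hmn]
  congr 2
  omega

noncomputable def topLevel (d k β : ℝ) : ℝ :=
  1 / k - (1 / (k * d)) * (√((1 - β) * k) - √(β * (d - k))) ^ 2

noncomputable def bottomLevel (d k β : ℝ) : ℝ :=
  (1 - k * topLevel d k β) / (d - k)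

section
variable {d k β : ℝ}

theorem one_sub_mul_topLevel (hk : k ≠ 0) :
    1 - k * topLevel d k β = (1 / d) * (√((1 - β) * k) - √(β * (d - k))) ^ 2 := by
  unfold topLevel
  field_simp
  ring

theorem bottomLevel_nonneg (hd : 0 ≤ d) (hk : k ≠ 0) (hkd : k ≤ d) : 0 ≤ bottomLevel d k β := by
  unfold bottomLevel
  rw [one_sub_mul_topLevel hk]
  exact div_nonneg (by positivity) (sub_nonneg.2 hkd)

theorem topLevel_eq (hk : 0 < k) (hkd : k ≤ d) (hβ0 : 0 ≤ β) (hβ1 : β ≤ 1) :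
    topLevel d k β = (√(1 - β) * √(d - k) + √β * √k) ^ 2 / (k * d) := by
  have hd : 0 < d := hk.trans_le hkd
  have hu := sq_sqrt hβ0
  have hv := sq_sqrt (sub_nonneg.2 hβ1)
  have hp := sq_sqrt hk.le
  have hq := sq_sqrt (sub_nonneg.2 hkd)
  unfold topLevel
  rw [sqrt_mul (sub_nonneg.2 hβ1), sqrt_mul hβ0]
  field_simp
  linear_combination (-(√k ^ 2 + √(d - k) ^ 2)) * (hu + hv) - hp - hq

theorem bottomLevel_eq (hk : k ≠ 0) (hkd : k < d) (hβ0 : 0 ≤ β) (hβ1 : β ≤ 1) :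
    bottomLevel d k β = (√β * √(d - k) - √(1 - β) * √k) ^ 2 / (d * (d - k)) := by
  have hdk : d - k ≠ 0 := (sub_pos.2 hkd).ne'
  unfold bottomLevel
  rw [one_sub_mul_topLevel hk, sqrt_mul (sub_nonneg.2 hβ1), sqrt_mul hβ0]
  field_simp
  ring

theorem sqrt_mul_sqrt_sub_le (hkβd : k ≤ β * d) (hβ0 : 0 ≤ β) (hβ1 : β ≤ 1) :
    √(1 - β) * √k ≤ √β * √(d - k) := by
  rw [← sqrt_mul (sub_nonneg.2 hβ1), ← sqrt_mul hβ0]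
  exact sqrt_le_sqrt (by linarith)

theorem sqrt_topLevel (hk : 0 < k) (hkd : k ≤ d) (hβ0 : 0 ≤ β) (hβ1 : β ≤ 1) :
    √(topLevel d k β) = (√(1 - β) * √(d - k) + √β * √k) / (√k * √d) := by
  rw [topLevel_eq hk hkd hβ0 hβ1, sqrt_div (sq_nonneg _), sqrt_sq (by positivity), sqrt_mul hk.le]

theorem sqrt_bottomLevel (hk : 0 < k) (hkd : k < d) (hkβd : k ≤ β * d) (hβ1 : β ≤ 1) :
    √(bottomLevel d k β) = (√β * √(d - k) - √(1 - β) * √k) / (√d * √(d - k)) := by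
  have hβ0 : 0 ≤ β := by nlinarith
  rw [bottomLevel_eq hk.ne' hkd hβ0 hβ1, sqrt_div (sq_nonneg _),
    sqrt_sq (sub_nonneg.2 (sqrt_mul_sqrt_sub_le hkβd hβ0 hβ1)), sqrt_mul (hk.trans hkd).le]

theorem bottomLevel_le_topLevel (hk : 0 < k) (hkd : k < d) (hkβd : k ≤ β * d) (hβ1 : β ≤ 1) :
    bottomLevel d k β ≤ topLevel d k β := by
  have hβ0 : 0 ≤ β := by nlinarith
  have hd : 0 < d := hk.trans hkd
  have htop : 0 ≤ topLevel d k β := by rw [topLevel_eq hk hkd.le hβ0 hβ1]; positivity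
  rw [← sqrt_le_sqrt_iff htop, sqrt_topLevel hk hkd.le hβ0 hβ1, sqrt_bottomLevel hk hkd hkβd hβ1,
    div_le_div_iff₀ (by positivity) (by positivity)]
  nlinarith [mul_nonneg (mul_nonneg (sqrt_nonneg d) (sqrt_nonneg (1 - β)))
    (add_nonneg (sq_nonneg √k) (sq_nonneg √(d - k)))]

theorem mul_sqrt_topLevel_add_mul_sqrt_bottomLevel (hk : 0 < k) (hkd : k < d)
    (hkβd : k ≤ β * d) (hβ1 : β ≤ 1) :
    k * √(topLevel d k β) + (d - k) * √(bottomLevel d k β) = √(d * β) := by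
  have hβ0 : 0 ≤ β := by nlinarith
  have hd : 0 < d := hk.trans hkd
  have hp := sq_sqrt hk.le
  have hq := sq_sqrt (sub_nonneg.2 hkd.le)
  have hr := sq_sqrt hd.le
  have hp0 : 0 < √k := sqrt_pos.2 hk
  have hq0 : 0 < √(d - k) := sqrt_pos.2 (sub_pos.2 hkd)
  have hr0 : 0 < √d := sqrt_pos.2 hd
  rw [sqrt_topLevel hk hkd.le hβ0 hβ1, sqrt_bottomLevel hk hkd hkβd hβ1, sqrt_mul hd.le]
  field_simp
  linear_combination k * √(1 - β) * hq + (k * √(1 - β) - √(1 - β) * d) * hp - √(d - k) * √β * √k * hr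

end

theorem vidal_monotone_bound_attained_general (d k : ℕ)
    (hk1 : 1 ≤ k) (hk2 : k ≤ d - 1)
    (β : ℝ) (hβ1 : (k : ℝ) / d ≤ β) (hβ2 : β ≤ 1)
    (t : ℝ)
    (ht : t = 1 / (k : ℝ) - (1 / ((k : ℝ) * d)) *
      (Real.sqrt ((1 - β) * k) - Real.sqrt (β * ((d : ℝ) - k))) ^ 2)
    (lam : Fin d → ℝ)
    (hlamdef : ∀ i : Fin d, lam i =
      if (i : ℕ) < k then t else (1 - k * t) / ((d : ℝ) - k)) :
    (0 ≤ (1 - k * t) / ((d : ℝ) - k) ∧ (1 - k * t) / ((d : ℝ) - k) ≤ t) ∧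
    (∑ i, Real.sqrt (lam i) = Real.sqrt (d * β)) ∧
    1 - ∑ i ∈ Finset.univ.filter (fun i : Fin d => (i : ℕ) < k), lam i =
      (1 / (d : ℝ)) *
        (Real.sqrt ((1 - β) * k) - Real.sqrt (β * ((d : ℝ) - k))) ^ 2 := by
  have hkd : k < d := by omega
  have hk : (0 : ℝ) < k := by exact_mod_cast hk1
  have hkdR : (k : ℝ) < d := by exact_mod_cast hkd
  have hkβd : (k : ℝ) ≤ β * d := (div_le_iff₀ (hk.trans hkdR)).1 hβ1
  replace ht : t = topLevel d k β := ht
  subst ht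
  refine ⟨⟨bottomLevel_nonneg (hk.trans hkdR).le hk.ne' hkdR.le,
    bottomLevel_le_topLevel hk hkdR hkβd hβ2⟩, ?_, ?_⟩
  · simp_rw [hlamdef, apply_ite Real.sqrt]
    rw [Fin.sum_ite_val_lt hkd.le, nsmul_eq_mul, nsmul_eq_mul, Nat.cast_sub hkd.le]
    exact mul_sqrt_topLevel_add_mul_sqrt_bottomLevel hk hkdR hkβd hβ2
  · rw [sum_congr rfl fun i hi => by rw [hlamdef, if_pos (mem_filter.1 hi).2], Finset.sum_const,
      Fin.card_filter_val_lt, min_eq_right hkd.le, nsmul_eq_mul]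
    exact one_sub_mul_topLevel hk.ne'

/-- The bound on the `k`-th Vidal monotone among Schmidt vectors with overlap `β` is
attained by the vector with `k` entries equal to `t` and `d−k` entries equal to
`(1−kt)/(d−k)`, where `t = 1/k − (1/(kd))(√((1−β)k) − √(β(d−k)))²`. -/
theorem vidal_monotone_bound_attained (d k : ℕ) (hd : 2 ≤ d)
    (hk1 : 1 ≤ k) (hk2 : k ≤ d - 1)
    (β : ℝ) (hβ1 : (k : ℝ) / d ≤ β) (hβ2 : β ≤ 1)
    (t : ℝ)
    (ht : t = 1 / (k : ℝ) - (1 / ((k : ℝ) * d)) *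
      (Real.sqrt ((1 - β) * k) - Real.sqrt (β * ((d : ℝ) - k))) ^ 2)
    (lam : Fin d → ℝ)
    (hlamdef : ∀ i : Fin d, lam i =
      if (i : ℕ) < k then t else (1 - k * t) / ((d : ℝ) - k)) :
    (0 ≤ (1 - k * t) / ((d : ℝ) - k) ∧ (1 - k * t) / ((d : ℝ) - k) ≤ t) ∧
    (∑ i, Real.sqrt (lam i) = Real.sqrt (d * β)) ∧
    1 - ∑ i ∈ Finset.univ.filter (fun i : Fin d => (i : ℕ) < k), lam i =
      (1 / (d : ℝ)) *
        (Real.sqrt ((1 - β) * k) - Real.sqrt (β * ((d : ℝ) - k))) ^ 2 :=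
  vidal_monotone_bound_attained_general d k hk1 hk2 β hβ1 hβ2 t ht lam hlamdef
end

section
/- Let d ≥ 2 and let k be an integer with 1 ≤ k ≤ d−1. The function f : ℝ → ℝ defined by f(β) = 0 for β ≤ k/d and f(β) = (1/d)·(√((1−β)·k) − √(β·(d−k)))² for β > k/d is convex on the interval [0, 1]. -/
/-- Each affine function `A_t` minorizes the piecewise function. -/
private lemma vidal_minorant (D K β t : ℝ) (hD : 2 ≤ D) (hK0 : 0 < K) (hKD : K ≤ D - 1)
    (hβ0 : 0 ≤ β) (hβ1 : β ≤ 1) (ht : 1 ≤ t) :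
    (1/D) * ((1-β)*K*(1-t) + β*(D-K)*(1-1/t)) ≤
      (if β ≤ K / D then 0 else
        (1/D) * (Real.sqrt ((1-β)*K) - Real.sqrt (β*(D-K)))^2) := by
  have hD0 : (0:ℝ) < D := by linarith
  have ht0 : (0:ℝ) < t := by linarith
  have hinv : t * (1/t) = 1 := mul_one_div_cancel ht0.ne'
  have ha : 0 ≤ (1-β)*K := mul_nonneg (by linarith) hK0.le
  have hb : 0 ≤ β*(D-K) := mul_nonneg hβ0 (by linarith)
  by_cases hcase : β ≤ K / D
  · rw [if_pos hcase]
    have hβD : β * D ≤ K := by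
      have h := (le_div_iff₀ hD0).mp hcase
      linarith
    have hba : β*(D-K) ≤ (1-β)*K := by nlinarith
    have key : (1-β)*K*(1-t) + β*(D-K)*(1-1/t) ≤ 0 := by
      nlinarith [mul_nonneg (sub_nonneg.2 hba) (sub_nonneg.2 ht), sq_nonneg (t-1),
        mul_nonneg hb (sq_nonneg (t-1)), mul_pos ht0 ht0]
    have := mul_le_mul_of_nonneg_left key (show (0:ℝ) ≤ 1/D by positivity)
    simpa using this
  · rw [if_neg hcase]
    have h1 : Real.sqrt ((1-β)*K) * Real.sqrt ((1-β)*K) = (1-β)*K := Real.mul_self_sqrt ha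
    have h2 : Real.sqrt (β*(D-K)) * Real.sqrt (β*(D-K)) = β*(D-K) := Real.mul_self_sqrt hb
    have hat : Real.sqrt ((1-β)*K*t) * Real.sqrt ((1-β)*K*t) = (1-β)*K*t :=
      Real.mul_self_sqrt (mul_nonneg ha ht0.le)
    have hbt : Real.sqrt (β*(D-K)/t) * Real.sqrt (β*(D-K)/t) = β*(D-K)/t :=
      Real.mul_self_sqrt (div_nonneg hb ht0.le)
    have hmul : Real.sqrt ((1-β)*K*t) * Real.sqrt (β*(D-K)/t)
        = Real.sqrt ((1-β)*K) * Real.sqrt (β*(D-K)) := by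
      rw [← Real.sqrt_mul (mul_nonneg ha ht0.le), ← Real.sqrt_mul ha]
      congr 1
      field_simp
    have hsq := sq_nonneg (Real.sqrt ((1-β)*K*t) - Real.sqrt (β*(D-K)/t))
    have inner : (1-β)*K*(1-t) + β*(D-K)*(1-1/t)
        ≤ (Real.sqrt ((1-β)*K) - Real.sqrt (β*(D-K)))^2 := by
      have hdiv : β*(D-K)*(1/t) = β*(D-K)/t := by ring
      nlinarith [hsq, hat, hbt, hmul, h1, h2]
    have hD' : 0 ≤ 1/D := by positivity
    nlinarith [mul_le_mul_of_nonneg_left inner hD']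

/-- For every `β` and `ε > 0` some affine `A_t` comes within `ε` of the function. -/
private lemma vidal_approx (D K β : ℝ) (hD : 2 ≤ D) (hK0 : 1 ≤ K) (hKD : K ≤ D - 1)
    (hβ0 : 0 ≤ β) (hβ1 : β ≤ 1) (ε : ℝ) (hε : 0 < ε) :
    ∃ t : ℝ, 1 ≤ t ∧
      (if β ≤ K / D then 0 else
        (1/D) * (Real.sqrt ((1-β)*K) - Real.sqrt (β*(D-K)))^2)
        ≤ (1/D) * ((1-β)*K*(1-t) + β*(D-K)*(1-1/t)) + ε := by
  have hD0 : (0:ℝ) < D := by linarith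
  by_cases hcase : β ≤ K / D
  · refine ⟨1, le_refl 1, ?_⟩
    rw [if_pos hcase]
    norm_num
    linarith
  · rw [if_neg hcase]
    push_neg at hcase
    have hβpos : 0 < β := lt_of_le_of_lt (by positivity) hcase
    have hβD : K < β * D := by
      have := (div_lt_iff₀ hD0).mp hcase
      linarith
    rcases lt_or_eq_of_le hβ1 with hβlt | hβeq
    · -- β < 1 : the optimal t attains equality
      have ha : 0 < (1-β)*K := mul_pos (by linarith) (by linarith)
      have hb : 0 < β*(D-K) := mul_pos hβpos (by linarith)
      have hab : (1-β)*K ≤ β*(D-K) := by nlinarith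
      have hsa : 0 < Real.sqrt ((1-β)*K) := Real.sqrt_pos.2 ha
      have hsb : 0 < Real.sqrt (β*(D-K)) := Real.sqrt_pos.2 hb
      refine ⟨Real.sqrt (β*(D-K)) / Real.sqrt ((1-β)*K), ?_, ?_⟩
      · rw [le_div_iff₀ hsa]
        simpa using Real.sqrt_le_sqrt hab
      · have h1 : Real.sqrt ((1-β)*K) * Real.sqrt ((1-β)*K) = (1-β)*K :=
          Real.mul_self_sqrt ha.le
        have h2 : Real.sqrt (β*(D-K)) * Real.sqrt (β*(D-K)) = β*(D-K) :=
          Real.mul_self_sqrt hb.le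
        set sa := Real.sqrt ((1-β)*K) with hsadef
        set sb := Real.sqrt (β*(D-K)) with hsbdef
        have key : (1-β)*K*(1 - sb / sa) + β*(D-K)*(1 - 1/(sb / sa))
            = (sa - sb)^2 := by
          rw [← h1, ← h2]
          field_simp
          ring
        rw [key]
        linarith [mul_pos (show (0:ℝ) < 1/D by positivity) hε]
    · -- β = 1
      subst hβeq
      have hbK : (0:ℝ) < D - K := by linarith
      refine ⟨max 1 ((D-K)/(D*ε)), le_max_left _ _, ?_⟩
      set t := max 1 ((D-K)/(D*ε)) with htdef
      have ht1 : (1:ℝ) ≤ t := le_max_left _ _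
      have ht0 : (0:ℝ) < t := by linarith
      have ht2 : (D-K)/(D*ε) ≤ t := le_max_right _ _
      have hz : (1 - (1:ℝ)) * K = 0 := by ring
      have hsimp : Real.sqrt ((1-(1:ℝ))*K) = 0 := by rw [hz, Real.sqrt_zero]
      rw [hsimp]
      have h2 : Real.sqrt ((1:ℝ)*(D-K)) ^ 2 = (1:ℝ)*(D-K) := Real.sq_sqrt (by linarith)
      have hfrac : (D-K)/t ≤ D*ε := by
        rw [div_le_iff₀ ht0]
        calc D - K = (D-K)/(D*ε) * (D*ε) := by field_simp
          _ ≤ t * (D*ε) := by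
              apply mul_le_mul_of_nonneg_right ht2 (by positivity)
          _ = D * ε * t := by ring
      have expand : (0 - Real.sqrt (1*(D-K)))^2 = 1*(D-K) := by
        rw [zero_sub, neg_sq]; exact h2
      rw [expand]
      have hgoal : (1/D) * (1*(D-K)) - (1/D)*((1-(1:ℝ))*K*(1-t) + 1*(D-K)*(1-1/t))
          = (1/D) * ((D-K)/t) := by field_simp; ring
      have : (1/D) * ((D-K)/t) ≤ ε := by
        calc (1/D) * ((D-K)/t) ≤ (1/D) * (D*ε) := by
              apply mul_le_mul_of_nonneg_left hfrac (by positivity)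
          _ = ε := by field_simp
      linarith [hgoal, this]

/-- The convex roof of the `k`-th Vidal monotone on isotropic states,
`β ↦ 0` for `β ≤ k/d` and `β ↦ (1/d)(√((1−β)k) − √(β(d−k)))²` for `β > k/d`,
is convex on `[0,1]`. -/
theorem convexOn_vidal_iso (d k : ℕ) (hd : 2 ≤ d) (hk1 : 1 ≤ k) (hk2 : k ≤ d - 1) :
    ConvexOn ℝ (Set.Icc (0 : ℝ) 1)
      (fun β : ℝ => if β ≤ (k : ℝ) / d then 0 else
        (1 / (d : ℝ)) *
          (Real.sqrt ((1 - β) * k) - Real.sqrt (β * ((d : ℝ) - k))) ^ 2) := by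
  have hD : (2:ℝ) ≤ (d:ℝ) := by exact_mod_cast hd
  have hK : (1:ℝ) ≤ (k:ℝ) := by exact_mod_cast hk1
  have hKD : (k:ℝ) ≤ (d:ℝ) - 1 := by
    have h1 : (k:ℝ) ≤ ((d-1 : ℕ):ℝ) := by exact_mod_cast hk2
    have h2 : ((d-1:ℕ):ℝ) = (d:ℝ) - 1 := by
      have : 1 ≤ d := by omega
      push_cast [Nat.cast_sub this]
      ring
    linarith [h1, h2.le, h2.ge]
  refine ⟨convex_Icc 0 1, ?_⟩
  intro x hx y hy p q hp hq hpq
  simp only [smul_eq_mul]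
  refine le_of_forall_pos_le_add fun ε hε => ?_
  have hz : p*x + q*y ∈ Set.Icc (0:ℝ) 1 := (convex_Icc (0:ℝ) 1) hx hy hp hq hpq
  obtain ⟨t, ht, hle⟩ := vidal_approx (d:ℝ) (k:ℝ) (p*x+q*y) hD hK hKD hz.1 hz.2 ε hε
  have hx' := vidal_minorant (d:ℝ) (k:ℝ) x t hD (by linarith) hKD hx.1 hx.2 ht
  have hy' := vidal_minorant (d:ℝ) (k:ℝ) y t hD (by linarith) hKD hy.1 hy.2 ht
  have haff : (1/(d:ℝ))*((1-(p*x+q*y))*(k:ℝ)*(1-t) + (p*x+q*y)*((d:ℝ)-(k:ℝ))*(1-1/t))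
      = p*((1/(d:ℝ))*((1-x)*(k:ℝ)*(1-t) + x*((d:ℝ)-(k:ℝ))*(1-1/t)))
      + q*((1/(d:ℝ))*((1-y)*(k:ℝ)*(1-t) + y*((d:ℝ)-(k:ℝ))*(1-1/t))) := by
    have hq' : q = 1 - p := by linarith
    subst hq'
    ring
  have hxx := mul_le_mul_of_nonneg_left hx' hp
  have hyy := mul_le_mul_of_nonneg_left hy' hq
  calc (if p*x+q*y ≤ (k:ℝ)/(d:ℝ) then (0:ℝ) else
        (1/(d:ℝ)) * (Real.sqrt ((1-(p*x+q*y))*(k:ℝ)) - Real.sqrt ((p*x+q*y)*((d:ℝ)-(k:ℝ))))^2)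
      ≤ (1/(d:ℝ))*((1-(p*x+q*y))*(k:ℝ)*(1-t) + (p*x+q*y)*((d:ℝ)-(k:ℝ))*(1-1/t)) + ε := hle
    _ = p*((1/(d:ℝ))*((1-x)*(k:ℝ)*(1-t) + x*((d:ℝ)-(k:ℝ))*(1-1/t)))
        + q*((1/(d:ℝ))*((1-y)*(k:ℝ)*(1-t) + y*((d:ℝ)-(k:ℝ))*(1-1/t))) + ε := by rw [haff]
    _ ≤ p*(if x ≤ (k:ℝ)/(d:ℝ) then (0:ℝ) else
          (1/(d:ℝ)) * (Real.sqrt ((1-x)*(k:ℝ)) - Real.sqrt (x*((d:ℝ)-(k:ℝ))))^2)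
        + q*(if y ≤ (k:ℝ)/(d:ℝ) then (0:ℝ) else
          (1/(d:ℝ)) * (Real.sqrt ((1-y)*(k:ℝ)) - Real.sqrt (y*((d:ℝ)-(k:ℝ))))^2) + ε := by
        linarith [hxx, hyy]
end

section
/- Fix an integer d ≥ 2, let b ∈ [1/d, 1], let λ : Fin d → ℝ satisfy λᵢ ≥ 0, Σᵢ λᵢ = 1 and Σᵢ √λᵢ = √(d·b), and set φ := Σᵢ √λᵢ·e_{(i,i)}. Then for every a ∈ [0, 1−b], the matrix ρ = b·Φ_d + (a/(d−1))·(Q − Φ_d) + ((1−a−b)/(d(d−1)))·(𝟙 − Q) lies in the convex hull, taken in the real vector space of (d²)×(d²) complex matrices, of the isotropic orbit orb_iso(φ) = { |(U ⊗ conj(U))φ⟩⟨(U ⊗ conj(U))φ| : U a d×d unitary }. -/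
/-!
The state `ρ(a)` is affine in `a`, so it suffices to reach `a = 0` and `a = 1 - b`. Identify a
vector `ψ` with the matrix `M` of its entries, so that `(U ⊗ Ū)ψ` corresponds to `U M U*`.
Averaging the projector onto `(U ⊗ Ū)ψ` over the monomial unitaries `U = D_z P_σ` (`P_σ` a
permutation matrix, `D_z` a diagonal of fourth roots of unity, which suffice because only
exponents `≤ 2` occur in the fourth moments) kills every entry except those at `((k,k),(m,m))` and
`((k,l),(k,l))`, and the permutation average makes these depend only on whether `k = m`, resp.
`k ≠ l`. For `M = diag √λ`, i.e. `ψ = φ`, the average is `ρ(1 - b)`; for `M = F diag √λ F*` with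
`F` the Fourier matrix, whose diagonal is constantly `√(db)/d`, it is `ρ(0)`.
-/

open Finset Complex ComplexConjugate Matrix
open scoped Kronecker

lemma Finset.sum_offDiag_eq_sub {α M : Type*} [DecidableEq α] [AddCommGroup M] (s : Finset α)
    (f : α → α → M) :
    ∑ p ∈ s.offDiag, f p.1 p.2 = ∑ i ∈ s, ∑ j ∈ s, f i j - ∑ i ∈ s, f i i := by
  rw [eq_sub_iff_add_eq, add_comm, ← s.sum_diag (fun p => f p.1 p.2),
    ← sum_union s.disjoint_diag_offDiag, diag_union_offDiag, sum_product]

lemma Finset.prod_pow_boole_add_boole {ι M : Type*} [Fintype ι] [DecidableEq ι] [CommMonoid M]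
    (x : ι → M) (k p : ι) :
    ∏ i, x i ^ ((if k = i then 1 else 0) + (if p = i then 1 else 0)) = x k * x p := by
  simp only [pow_add, prod_mul_distrib, prod_pow_boole, mem_univ, if_true]

lemma inv_factorial_mul_factorial_sub_one {K : Type*} [Field K] [CharZero K] {c : ℕ}
    (hc : c ≠ 0) : ((c.factorial : K))⁻¹ * (c - 1).factorial = (c : K)⁻¹ := by
  have hf : ((c - 1).factorial : K) ≠ 0 := Nat.cast_ne_zero.mpr (Nat.factorial_ne_zero _)
  rw [← Nat.mul_factorial_pred hc]
  push_cast
  field_simp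

lemma inv_factorial_mul_factorial_sub_two {K : Type*} [Field K] [CharZero K] {c : ℕ}
    (hc : 2 ≤ c) : ((c.factorial : K))⁻¹ * (c - 2).factorial = (c * (c - 1) : K)⁻¹ := by
  have hf : ((c - 2).factorial : K) ≠ 0 := Nat.cast_ne_zero.mpr (Nat.factorial_ne_zero _)
  have hc1 : (c : K) - 1 ≠ 0 := by rw [sub_ne_zero]; exact_mod_cast (by omega : c ≠ 1)
  rw [← Nat.mul_factorial_pred (by omega), ← Nat.mul_factorial_pred (n := c - 1) (by omega),
    show c - 1 - 1 = c - 2 by omega]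
  push_cast [Nat.cast_sub (by omega : 1 ≤ c)]
  field_simp

lemma Convex.add_smul_mem_of_le {𝕜 E : Type*} [Field 𝕜] [LinearOrder 𝕜] [IsStrictOrderedRing 𝕜]
    [AddCommGroup E] [Module 𝕜 E] {s : Set E} (hs : Convex 𝕜 s) {x y : E} {a c : 𝕜}
    (hx : x ∈ s) (hxy : x + c • y ∈ s) (ha : 0 ≤ a) (hac : a ≤ c) : x + a • y ∈ s := by
  have hc : 0 ≤ c := ha.trans hac
  have := hs.add_smul_mem hx hxy ⟨div_nonneg ha hc, div_le_one_of_le₀ hac hc⟩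
  rwa [smul_smul, div_mul_cancel_of_imp fun h => le_antisymm (h ▸ hac) ha] at this

lemma IsPrimitiveRoot.sum_pow_mul_conj_pow {ζ : ℂ} {N : ℕ} (hζ : IsPrimitiveRoot ζ N) (a b : ℕ) :
    ∑ w : Fin N, (ζ ^ a * conj ζ ^ b) ^ (w : ℕ) = if a ≡ b [MOD N] then (N : ℂ) else 0 := by
  rcases N.eq_zero_or_pos with rfl | hN
  · simp
  have hr : ζ ^ a * conj ζ ^ b = ζ ^ ((a : ℤ) - b) := by
    rw [← Complex.inv_eq_conj (hζ.norm'_eq_one hN.ne'), zpow_sub₀ (hζ.ne_zero hN.ne'), inv_pow]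
    simp [div_eq_mul_inv]
  have hrN : (ζ ^ ((a : ℤ) - b)) ^ N = 1 := by
    rw [← zpow_natCast, ← _root_.zpow_mul, mul_comm, _root_.zpow_mul, zpow_natCast,
      hζ.pow_eq_one, _root_.one_zpow]
  have hmod : a ≡ b [MOD N] ↔ ζ ^ ((a : ℤ) - b) = 1 := by
    rw [Nat.modEq_iff_dvd, dvd_sub_comm, hζ.zpow_eq_one_iff_dvd]
  rw [hr, Fin.sum_univ_eq_sum_range (fun w => (ζ ^ ((a : ℤ) - b)) ^ w)]
  by_cases h1 : ζ ^ ((a : ℤ) - b) = 1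
  · simp [h1, hmod]
  · rw [if_neg (hmod.not.mpr h1), geom_sum_eq h1, hrN, sub_self, zero_div]

namespace Equiv.Perm

lemma exists_apply_eq_and_apply_eq {α : Type*} [DecidableEq α] {k l k' l' : α} (hkl : k ≠ l)
    (hkl' : k' ≠ l') : ∃ τ : Perm α, τ k = k' ∧ τ l = l' := by
  have h : swap k k' l ≠ k' := fun h =>
    hkl ((swap k k').injective (h.trans (swap_apply_left k k').symm)).symm
  exact ⟨swap (swap k k' l) l' * swap k k', by simp [swap_apply_of_ne_of_ne h.symm hkl'], by simp⟩

variable {α M : Type*} [Fintype α] [DecidableEq α] [AddCommMonoid M] [IsAddTorsionFree M]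

lemma sum_apply_eq_factorial_smul (k : α) (f : α → M) :
    ∑ σ : Perm α, f (σ k) = (Fintype.card α - 1).factorial • ∑ i, f i := by
  have hconst (i : α) : ∑ σ : Perm α, f (σ i) = ∑ σ : Perm α, f (σ k) := by
    rw [← _root_.Equiv.sum_comp (Equiv.mulRight (swap i k))]
    simp
  have hcard : 0 < Fintype.card α := Fintype.card_pos_iff.mpr ⟨k⟩
  refine nsmul_right_injective hcard.ne' ?_
  calc Fintype.card α • ∑ σ : Perm α, f (σ k) = ∑ i, ∑ σ : Perm α, f (σ i) := by
        simp [hconst]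
    _ = ∑ σ : Perm α, ∑ i, f i := by
        rw [Finset.sum_comm]; exact Finset.sum_congr rfl fun σ _ => _root_.Equiv.sum_comp σ f
    _ = Fintype.card α • (Fintype.card α - 1).factorial • ∑ i, f i := by
        rw [Finset.sum_const, Finset.card_univ, Fintype.card_perm, smul_smul,
          Nat.mul_factorial_pred hcard.ne']

lemma sum_apply_apply_eq_factorial_smul {k l : α} (hkl : k ≠ l) (f : α → α → M) :
    ∑ σ : Perm α, f (σ k) (σ l)
      = (Fintype.card α - 2).factorial • ∑ p ∈ univ.offDiag, f p.1 p.2 := by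
  have hconst (p : α × α) (hp : p ∈ (univ : Finset α).offDiag) :
      ∑ σ : Perm α, f (σ p.1) (σ p.2) = ∑ σ : Perm α, f (σ k) (σ l) := by
    obtain ⟨τ, hτ₁, hτ₂⟩ := exists_apply_eq_and_apply_eq (mem_offDiag.mp hp).2.2 hkl
    rw [← _root_.Equiv.sum_comp (Equiv.mulRight τ)]
    simp [hτ₁, hτ₂]
  have hcard : 1 < Fintype.card α := Fintype.one_lt_card_iff.mpr ⟨k, l, hkl⟩
  have hoff : (univ : Finset α).offDiag.card = Fintype.card α * (Fintype.card α - 1) := by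
    rw [offDiag_card, Finset.card_univ, Nat.mul_sub_one]
  refine nsmul_right_injective (n := (univ : Finset α).offDiag.card)
    (by rw [hoff]; exact Nat.mul_ne_zero (by omega) (by omega)) ?_
  calc (univ : Finset α).offDiag.card • ∑ σ : Perm α, f (σ k) (σ l)
        = ∑ p ∈ univ.offDiag, ∑ σ : Perm α, f (σ p.1) (σ p.2) := by
        rw [Finset.sum_congr rfl hconst, Finset.sum_const]
    _ = ∑ σ : Perm α, ∑ p ∈ univ.offDiag, f p.1 p.2 := by
        rw [Finset.sum_comm]
        refine Finset.sum_congr rfl fun σ _ => ?_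
        exact Finset.sum_nbij' (fun p => (σ p.1, σ p.2)) (fun p => (σ⁻¹ p.1, σ⁻¹ p.2))
          (by simp) (by simp) (by simp) (by simp) (by simp)
    _ = _ := by
        beta_reduce
        rw [Finset.sum_const, Finset.card_univ, Fintype.card_perm, smul_smul, hoff, mul_assoc,
          show Fintype.card α - 2 = Fintype.card α - 1 - 1 by omega,
          Nat.mul_factorial_pred (by omega), Nat.mul_factorial_pred (by omega)]

end Equiv.Perm

lemma sum_sum_mul_conj_unitary_conj {n : Type*} [Fintype n] [DecidableEq n] {W : Matrix n n ℂ}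
    (hW : W ∈ unitaryGroup n ℂ) (X : Matrix n n ℂ) :
    ∑ k, ∑ l, (W * X * Wᴴ) k l * conj ((W * X * Wᴴ) k l) = ∑ k, ∑ l, X k l * conj (X k l) := by
  have htrace (Y : Matrix n n ℂ) : ∑ k, ∑ l, Y k l * conj (Y k l) = trace (Y * Yᴴ) := by
    simp [trace, mul_apply]
  have hWW : Wᴴ * W = 1 := mem_unitaryGroup_iff'.mp hW
  have hY : W * X * Wᴴ * (W * X * Wᴴ)ᴴ = W * (X * Xᴴ) * Wᴴ := by
    simp only [conjTranspose_mul, conjTranspose_conjTranspose, Matrix.mul_assoc]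
    rw [← Matrix.mul_assoc Wᴴ W, hWW, Matrix.one_mul]
  rw [htrace, htrace, hY, trace_mul_cycle, hWW, Matrix.one_mul]

section Twirl

variable {n : Type*}

def ketBra (v : n × n → ℂ) : Matrix (n × n) (n × n) ℂ := vecMulVec v (star v)

def isoOrbit [Fintype n] [DecidableEq n] (φ : n × n → ℂ) : Set (Matrix (n × n) (n × n) ℂ) :=
  { A | ∃ U : Matrix.unitaryGroup n ℂ,
          A = Matrix.vecMulVec
            ((Matrix.kroneckerMap (· * ·) (U : Matrix n n ℂ)
              ((U : Matrix n n ℂ).map (starRingEnd ℂ))).mulVec φ)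
            (star ((Matrix.kroneckerMap (· * ·) (U : Matrix n n ℂ)
              ((U : Matrix n n ℂ).map (starRingEnd ℂ))).mulVec φ)) }

/-- `vec Xᵀ` is the vector with entry `X k l` at `(k, l)`. -/
lemma kronecker_conj_mulVec_vec_transpose [Fintype n] (U X : Matrix n n ℂ) :
    (U ⊗ₖ U.map (starRingEnd ℂ)) *ᵥ vec Xᵀ = vec (U * X * Uᴴ)ᵀ := by
  rw [kronecker_mulVec_vec, transpose_mul, transpose_mul, conjTranspose_transpose]
  simp [Matrix.mul_assoc]

variable [DecidableEq n]

lemma boole_add_boole_modEq_four_iff {k l m p : n} :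
    (∀ i, (if k = i then 1 else 0) + (if p = i then 1 else 0) ≡
      (if l = i then 1 else 0) + (if m = i then 1 else 0) [MOD 4])
      ↔ (k = l ∧ m = p) ∨ (k = m ∧ l = p) := by
  constructor
  · intro h
    have hk : k = l ∨ k = m := by
      by_contra! hne
      have := h k
      simp only [Nat.ModEq, if_true, if_neg hne.1.symm, if_neg hne.2.symm] at this
      split_ifs at this
    rcases hk with rfl | rfl
    · refine Or.inl ⟨rfl, ?_⟩
      by_contra hmp
      have := h m
      simp only [Nat.ModEq, if_true, if_neg (Ne.symm hmp)] at this
      omega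
    · refine Or.inr ⟨rfl, ?_⟩
      by_contra hlp
      have := h l
      simp only [Nat.ModEq, if_true, if_neg (Ne.symm hlp)] at this
      omega
  · rintro (⟨rfl, rfl⟩ | ⟨rfl, rfl⟩) i
    · rfl
    · rw [add_comm]

variable [Fintype n]

lemma ketBra_mem_isoOrbit (U : unitaryGroup n ℂ) (X : Matrix n n ℂ) :
    ketBra (vec ((U : Matrix n n ℂ) * X * (U : Matrix n n ℂ)ᴴ)ᵀ) ∈ isoOrbit (vec Xᵀ) :=
  ⟨U, by rw [kronecker_conj_mulVec_vec_transpose]; rfl⟩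

def phasePerm (σ : Equiv.Perm n) (z : n → Fin 4) : Matrix n n ℂ :=
  diagonal (fun i => I ^ (z i : ℕ)) * σ.permMatrix ℂ

lemma phasePerm_mem_unitaryGroup (σ : Equiv.Perm n) (z : n → Fin 4) :
    phasePerm σ z ∈ unitaryGroup n ℂ := by
  refine Submonoid.mul_mem _ ?_ ?_
  · rw [mem_unitaryGroup_iff, star_eq_conjTranspose, diagonal_conjTranspose, diagonal_mul_diagonal,
      ← diagonal_one]
    congr 1
    ext i
    simp [← mul_pow, Complex.conj_I]
  · rw [mem_unitaryGroup_iff, star_eq_conjTranspose, conjTranspose_permMatrix, ← permMatrix_mul,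
      inv_mul_cancel, permMatrix_one]

lemma phasePerm_mul_mul_conjTranspose_apply (σ : Equiv.Perm n) (z : n → Fin 4)
    (M : Matrix n n ℂ) (k l : n) :
    (phasePerm σ z * M * (phasePerm σ z)ᴴ) k l
      = I ^ (z k : ℕ) * conj (I ^ (z l : ℕ)) * M (σ k) (σ l) := by
  have hP : σ.permMatrix ℂ * M * (σ.permMatrix ℂ)ᴴ = M.submatrix σ σ := by
    rw [conjTranspose_permMatrix, PEquiv.toMatrix_toPEquiv_mul, PEquiv.mul_toMatrix_toPEquiv]
    rfl
  have hD : phasePerm σ z * M * (phasePerm σ z)ᴴ = diagonal (fun i => I ^ (z i : ℕ))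
      * (σ.permMatrix ℂ * M * (σ.permMatrix ℂ)ᴴ) * (diagonal (fun i => I ^ (z i : ℕ)))ᴴ := by
    simp only [phasePerm, conjTranspose_mul, Matrix.mul_assoc]
  rw [hD, hP, diagonal_conjTranspose, mul_diagonal, diagonal_mul]
  simp only [submatrix_apply, Pi.star_apply, RCLike.star_def]
  ring

lemma sum_phase_moment (k l m p : n) :
    ∑ z : n → Fin 4, I ^ (z k : ℕ) * conj (I ^ (z l : ℕ)) * conj (I ^ (z m : ℕ)) * I ^ (z p : ℕ)
      = if (k = l ∧ m = p) ∨ (k = m ∧ l = p) then 4 ^ Fintype.card n else 0 := by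
  set a : n → ℕ := fun i => (if k = i then 1 else 0) + (if p = i then 1 else 0)
  set b : n → ℕ := fun i => (if l = i then 1 else 0) + (if m = i then 1 else 0)
  have hprod (z : n → Fin 4) :
      I ^ (z k : ℕ) * conj (I ^ (z l : ℕ)) * conj (I ^ (z m : ℕ)) * I ^ (z p : ℕ)
        = ∏ i, (I ^ a i * conj I ^ b i) ^ (z i : ℕ) := by
    have (i : n) : (I ^ a i * conj I ^ b i) ^ (z i : ℕ)
        = (I ^ (z i : ℕ)) ^ a i * conj (I ^ (z i : ℕ)) ^ b i := by
      rw [mul_pow, ← pow_mul, ← pow_mul, map_pow, ← pow_mul, ← pow_mul, mul_comm (a i),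
        mul_comm (b i)]
    simp only [this, prod_mul_distrib, a, b, prod_pow_boole_add_boole]
    ring
  rw [Fintype.sum_congr _ _ hprod,
    ← Fintype.prod_sum (fun i (w : Fin 4) => (I ^ a i * conj I ^ b i) ^ (w : ℕ))]
  simp only [Complex.isPrimitiveRoot_I.sum_pow_mul_conj_pow, Fintype.prod_ite_zero, a, b,
    boole_add_boole_modEq_four_iff]
  simp

def twirl (M : Matrix n n ℂ) : Matrix (n × n) (n × n) ℂ :=
  ∑ w : Equiv.Perm n × (n → Fin 4), ketBra (vec (phasePerm w.1 w.2 * M * (phasePerm w.1 w.2)ᴴ)ᵀ)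

lemma twirl_apply (M : Matrix n n ℂ) (k l m p : n) :
    twirl M (k, l) (m, p) = if (k = l ∧ m = p) ∨ (k = m ∧ l = p) then
      4 ^ Fintype.card n * ∑ σ : Equiv.Perm n, M (σ k) (σ l) * conj (M (σ m) (σ p)) else 0 := by
  have hterm (σ : Equiv.Perm n) (z : n → Fin 4) :
      ketBra (vec (phasePerm σ z * M * (phasePerm σ z)ᴴ)ᵀ) (k, l) (m, p)
        = (I ^ (z k : ℕ) * conj (I ^ (z l : ℕ)) * conj (I ^ (z m : ℕ)) * I ^ (z p : ℕ))
          * (M (σ k) (σ l) * conj (M (σ m) (σ p))) := by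
    simp only [ketBra, vecMulVec_apply, Pi.star_apply, vec, transpose_apply,
      phasePerm_mul_mul_conjTranspose_apply, RCLike.star_def, map_mul, Complex.conj_conj]
    ring
  rw [twirl, Matrix.sum_apply, Fintype.sum_prod_type]
  simp only [hterm, ← sum_mul, sum_phase_moment]
  split_ifs <;> simp [mul_sum]

lemma twirl_mem_convexHull_isoOrbit {W : Matrix n n ℂ} (hW : W ∈ unitaryGroup n ℂ)
    (X : Matrix n n ℂ) :
    ((Fintype.card n).factorial * 4 ^ Fintype.card n : ℝ)⁻¹ • twirl (W * X * Wᴴ)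
      ∈ convexHull ℝ (isoOrbit (vec Xᵀ)) := by
  have hmem (w : Equiv.Perm n × (n → Fin 4)) :
      ketBra (vec (phasePerm w.1 w.2 * (W * X * Wᴴ) * (phasePerm w.1 w.2)ᴴ)ᵀ)
        ∈ isoOrbit (vec Xᵀ) := by
    have := ketBra_mem_isoOrbit ⟨_, Submonoid.mul_mem _ (phasePerm_mem_unitaryGroup w.1 w.2) hW⟩ X
    simpa [conjTranspose_mul, Matrix.mul_assoc] using this
  have := (univ : Finset (Equiv.Perm n × (n → Fin 4))).centerMass_mem_convexHull
    (w := fun _ => (1 : ℝ)) (fun _ _ => zero_le_one) (by simp [Fintype.card_pos])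
    (fun w _ => hmem w)
  simpa [centerMass, twirl, Fintype.card_perm] using this

def twirlForm (x y w : ℂ) : Matrix (n × n) (n × n) ℂ :=
  of fun p q => if p.1 = p.2 ∧ q.1 = q.2 then (if p.1 = q.1 then x else y)
    else if p = q then w else 0

lemma inv_smul_twirl_eq_twirlForm (M : Matrix n n ℂ) :
    ((Fintype.card n).factorial * 4 ^ Fintype.card n : ℝ)⁻¹ • twirl M = twirlForm
      ((Fintype.card n : ℂ)⁻¹ * ∑ i, M i i * conj (M i i))
      ((Fintype.card n * (Fintype.card n - 1) : ℂ)⁻¹ *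
        ∑ q ∈ univ.offDiag, M q.1 q.1 * conj (M q.2 q.2))
      ((Fintype.card n * (Fintype.card n - 1) : ℂ)⁻¹ *
        ∑ q ∈ univ.offDiag, M q.1 q.2 * conj (M q.1 q.2)) := by
  set c := Fintype.card n
  have hnorm (j : ℕ) (S : ℂ) : (↑((c.factorial * 4 ^ c : ℝ)⁻¹) : ℂ) * (4 ^ c * (j • S))
      = ((c.factorial : ℂ)⁻¹ * j) * S := by
    have h4 : (4 : ℂ) ^ c ≠ 0 := pow_ne_zero _ (by norm_num)
    rw [nsmul_eq_mul]; push_cast; field_simp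
  ext ⟨k, l⟩ ⟨m, p⟩
  rw [Matrix.smul_apply, twirl_apply, Complex.real_smul]
  simp only [twirlForm, of_apply]
  by_cases hdiag : k = l ∧ m = p
  · obtain ⟨rfl, rfl⟩ := hdiag
    rw [if_pos (Or.inl ⟨rfl, rfl⟩), if_pos ⟨rfl, rfl⟩]
    by_cases hkm : k = m
    · subst hkm
      rw [if_pos rfl, Equiv.Perm.sum_apply_eq_factorial_smul k (fun i => M i i * conj (M i i)),
        hnorm, inv_factorial_mul_factorial_sub_one (Fintype.card_pos_iff.mpr ⟨k⟩).ne']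
    · rw [if_neg hkm,
        Equiv.Perm.sum_apply_apply_eq_factorial_smul hkm (fun i j => M i i * conj (M j j)), hnorm,
        inv_factorial_mul_factorial_sub_two (Fintype.one_lt_card_iff.mpr ⟨k, m, hkm⟩)]
  · rw [if_neg hdiag]
    by_cases hswap : k = m ∧ l = p
    · obtain ⟨rfl, rfl⟩ := hswap
      have hkl : k ≠ l := fun h => hdiag ⟨h, h⟩
      rw [if_pos (Or.inr ⟨rfl, rfl⟩), if_pos rfl,
        Equiv.Perm.sum_apply_apply_eq_factorial_smul hkl (fun i j => M i j * conj (M i j)), hnorm,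
        inv_factorial_mul_factorial_sub_two (Fintype.one_lt_card_iff.mpr ⟨k, l, hkl⟩)]
    · rw [if_neg (by tauto), if_neg (fun h => hswap (Prod.mk.inj h)), mul_zero]

end Twirl

section Fourier

variable {d : ℕ} {ζ : ℂ}

noncomputable def dftMatrix (ζ : ℂ) (d : ℕ) : Matrix (Fin d) (Fin d) ℂ :=
  of fun k i => ζ ^ ((k : ℕ) * i) / (Real.sqrt d : ℂ)

lemma dftMatrix_mul_conj (k l i : Fin d) :
    dftMatrix ζ d k i * conj (dftMatrix ζ d l i)
      = (ζ ^ (k : ℕ) * conj ζ ^ (l : ℕ)) ^ (i : ℕ) / d := by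
  have hsq : (Real.sqrt d : ℂ) * (Real.sqrt d : ℂ) = d := by
    rw [← Complex.ofReal_mul, Real.mul_self_sqrt (Nat.cast_nonneg d)]; push_cast; rfl
  simp only [dftMatrix, of_apply, map_div₀, map_pow, Complex.conj_ofReal]
  rw [div_mul_div_comm, hsq, mul_pow, ← pow_mul, ← pow_mul]

lemma dftMatrix_mem_unitaryGroup (hζ : IsPrimitiveRoot ζ d) :
    dftMatrix ζ d ∈ unitaryGroup (Fin d) ℂ := by
  rw [mem_unitaryGroup_iff]
  ext k l
  have hd : (d : ℂ) ≠ 0 := Nat.cast_ne_zero.mpr (Fin.pos k).ne'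
  simp only [mul_apply, star_apply, RCLike.star_def, dftMatrix_mul_conj, ← sum_div,
    hζ.sum_pow_mul_conj_pow, one_apply, Nat.ModEq, Nat.mod_eq_of_lt k.isLt,
    Nat.mod_eq_of_lt l.isLt, Fin.val_inj]
  split_ifs <;> simp [hd]

lemma dftMatrix_mul_conj_self (hζ : IsPrimitiveRoot ζ d) (k i : Fin d) :
    dftMatrix ζ d k i * conj (dftMatrix ζ d k i) = (d : ℂ)⁻¹ := by
  have hζ1 : ζ * conj ζ = 1 := by
    rw [Complex.mul_conj', hζ.norm'_eq_one (Fin.pos k).ne']; simp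
  rw [dftMatrix_mul_conj, ← mul_pow, hζ1]
  simp

end Fourier

section Schmidt

variable {d : ℕ} {lam : Fin d → ℝ} {b : ℝ}

noncomputable def sqrtDiagonal (lam : Fin d → ℝ) : Matrix (Fin d) (Fin d) ℂ :=
  diagonal fun i => (Real.sqrt (lam i) : ℂ)

lemma sum_sqrt_mul_conj (hlam : ∀ i, 0 ≤ lam i) (hsum : ∑ i, lam i = 1) :
    ∑ i, (Real.sqrt (lam i) : ℂ) * conj (Real.sqrt (lam i) : ℂ) = 1 := by
  simp only [Complex.conj_ofReal, ← Complex.ofReal_mul, Real.mul_self_sqrt (hlam _)]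
  exact_mod_cast hsum

lemma sum_sqrt_mul_conj_sum_sqrt (hs : ∑ i, Real.sqrt (lam i) = Real.sqrt (d * b))
    (hb : 0 ≤ b) :
    (∑ i, (Real.sqrt (lam i) : ℂ)) * conj (∑ i, (Real.sqrt (lam i) : ℂ)) = d * b := by
  rw [← Complex.ofReal_sum, Complex.conj_ofReal, ← Complex.ofReal_mul, hs,
    Real.mul_self_sqrt (by positivity)]
  push_cast; rfl

lemma sum_sum_sqrtDiagonal_mul_conj (hlam : ∀ i, 0 ≤ lam i) (hsum : ∑ i, lam i = 1) :
    ∑ k, ∑ l, sqrtDiagonal lam k l * conj (sqrtDiagonal lam k l) = 1 := by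
  simp only [sqrtDiagonal, diagonal_apply, apply_ite conj, map_zero, ite_mul, zero_mul, mul_ite,
    mul_zero]
  simpa using sum_sqrt_mul_conj hlam hsum

lemma inv_smul_twirl_sqrtDiagonal (hlam : ∀ i, 0 ≤ lam i) (hsum : ∑ i, lam i = 1)
    (hs : ∑ i, Real.sqrt (lam i) = Real.sqrt (d * b)) (hb : 0 ≤ b) :
    ((d.factorial * 4 ^ d : ℝ))⁻¹ • twirl (sqrtDiagonal lam)
      = twirlForm (d : ℂ)⁻¹ ((d * (d - 1) : ℂ)⁻¹ * (d * b - 1)) 0 := by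
  have := inv_smul_twirl_eq_twirlForm (sqrtDiagonal lam)
  simp only [Fintype.card_fin] at this
  rw [this]
  congr 1
  · simp only [sqrtDiagonal, diagonal_apply_eq, sum_sqrt_mul_conj hlam hsum, mul_one]
  · rw [sum_offDiag_eq_sub univ fun i j => sqrtDiagonal lam i i * conj (sqrtDiagonal lam j j)]
    simp only [sqrtDiagonal, diagonal_apply_eq, ← Finset.mul_sum, ← sum_mul, ← map_sum,
      sum_sqrt_mul_conj_sum_sqrt hs hb, sum_sqrt_mul_conj hlam hsum]
  · rw [sum_eq_zero fun q hq => by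
      simp [sqrtDiagonal, diagonal_apply_ne _ (mem_offDiag.mp hq).2.2], mul_zero]

lemma inv_smul_twirl_dftMatrix_conj (hd : 1 < d) {ζ : ℂ} (hζ : IsPrimitiveRoot ζ d)
    (hlam : ∀ i, 0 ≤ lam i) (hsum : ∑ i, lam i = 1)
    (hs : ∑ i, Real.sqrt (lam i) = Real.sqrt (d * b)) (hb : 0 ≤ b) :
    ((d.factorial * 4 ^ d : ℝ))⁻¹ • twirl (dftMatrix ζ d * sqrtDiagonal lam * (dftMatrix ζ d)ᴴ)
      = twirlForm (b / d) (b / d) ((d * (d - 1) : ℂ)⁻¹ * (1 - b)) := by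
  set G := dftMatrix ζ d * sqrtDiagonal lam * (dftMatrix ζ d)ᴴ
  have hd0 : (d : ℂ) ≠ 0 := by exact_mod_cast (by omega : d ≠ 0)
  have hd1 : (d : ℂ) - 1 ≠ 0 := by rw [sub_ne_zero]; exact_mod_cast (by omega : d ≠ 1)
  have hGdiag (k : Fin d) : G k k = (d : ℂ)⁻¹ * ∑ i, (Real.sqrt (lam i) : ℂ) := by
    simp only [G, sqrtDiagonal]
    rw [mul_apply]
    simp only [mul_diagonal, conjTranspose_apply, RCLike.star_def, mul_sum]
    refine sum_congr rfl fun i _ => ?_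
    rw [mul_right_comm, dftMatrix_mul_conj_self hζ, mul_comm]
  have hGG (k m : Fin d) : G k k * conj (G m m) = b / d := by
    rw [hGdiag, hGdiag, map_mul, mul_mul_mul_comm, sum_sqrt_mul_conj_sum_sqrt hs hb, map_inv₀,
      map_natCast]
    field_simp
  have hdiag : ∑ k, G k k * conj (G k k) = b := by
    simp only [hGG, sum_const, card_univ, Fintype.card_fin, nsmul_eq_mul]
    field_simp
  have := inv_smul_twirl_eq_twirlForm G
  simp only [Fintype.card_fin] at this
  rw [this]
  congr 1
  · rw [hdiag]; field_simp
  · simp only [hGG, sum_const, offDiag_card, card_univ, Fintype.card_fin, nsmul_eq_mul]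
    push_cast [Nat.cast_sub (Nat.le_mul_self d)]
    field_simp
  · rw [sum_offDiag_eq_sub univ fun k l => G k l * conj (G k l), hdiag,
      sum_sum_mul_conj_unitary_conj (dftMatrix_mem_unitaryGroup hζ),
      sum_sum_sqrtDiagonal_mul_conj hlam hsum]

end Schmidt

lemma phasePermIso_eq_twirlForm {d : ℕ} (hd : 1 < d)
    {Φ Q : Matrix (Fin d × Fin d) (Fin d × Fin d) ℂ}
    (hΦ : ∀ p q, Φ p q = if p.1 = p.2 ∧ q.1 = q.2 then ((d : ℂ))⁻¹ else 0)
    (hQ : ∀ p q, Q p q = if p.1 = p.2 ∧ q = p then 1 else 0) (a b : ℝ) :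
    b • Φ + (a / ((d : ℝ) - 1)) • (Q - Φ) + ((1 - a - b) / ((d : ℝ) * ((d : ℝ) - 1))) • (1 - Q)
      = twirlForm (((b + a) / d : ℝ) : ℂ) ((b / d - a / (d * (d - 1)) : ℝ) : ℂ)
          (((1 - a - b) / (d * (d - 1)) : ℝ) : ℂ) := by
  have hd0 : (d : ℂ) ≠ 0 := by exact_mod_cast (by omega : d ≠ 0)
  have hd1 : (d : ℂ) - 1 ≠ 0 := by rw [sub_ne_zero]; exact_mod_cast (by omega : d ≠ 1)
  ext ⟨k, l⟩ ⟨m, p⟩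
  simp only [Matrix.add_apply, Matrix.smul_apply, Matrix.sub_apply, hΦ, hQ, one_apply, twirlForm,
    of_apply, Complex.real_smul, Prod.mk.injEq]
  by_cases hkl : k = l <;> by_cases hmp : m = p <;> by_cases hkm : k = m <;>
    by_cases hlp : l = p <;> simp_all [eq_comm, sub_eq_add_neg] <;> field_simp

/-- For `b ∈ [1/d,1]`, a Schmidt vector `λ` with `∑ᵢ √λᵢ = √(db)`, the pure state
`φ = ∑ᵢ √λᵢ |ii⟩`, and any `a ∈ [0, 1−b]`, the phase-permutation isotropic state
`ρ = bΦ_d + (a/(d−1))(Q − Φ_d) + ((1−a−b)/(d(d−1)))(𝟙 − Q)` lies in the convex hull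
of the isotropic orbit `{ |(U ⊗ conj U)φ⟩⟨(U ⊗ conj U)φ| : U unitary }`. -/
theorem phasePermIso_mem_convexHull_isoOrbit (d : ℕ) (hd : 2 ≤ d)
    (b : ℝ) (hb : b ∈ Set.Icc (1 / (d : ℝ)) 1)
    (lam : Fin d → ℝ) (hlam : ∀ i, 0 ≤ lam i) (hsum : ∑ i, lam i = 1)
    (hs : ∑ i, Real.sqrt (lam i) = Real.sqrt (d * b))
    (φ : Fin d × Fin d → ℂ)
    (hφ : φ = fun p => if p.1 = p.2 then ((Real.sqrt (lam p.1) : ℝ) : ℂ) else 0)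
    (Φ : Matrix (Fin d × Fin d) (Fin d × Fin d) ℂ)
    (hΦ : ∀ p q, Φ p q = if p.1 = p.2 ∧ q.1 = q.2 then ((d : ℂ))⁻¹ else 0)
    (Q : Matrix (Fin d × Fin d) (Fin d × Fin d) ℂ)
    (hQ : ∀ p q, Q p q = if p.1 = p.2 ∧ q = p then 1 else 0)
    (a : ℝ) (haa : a ∈ Set.Icc (0 : ℝ) (1 - b)) :
    b • Φ + (a / ((d : ℝ) - 1)) • (Q - Φ)
        + ((1 - a - b) / ((d : ℝ) * ((d : ℝ) - 1))) • (1 - Q) ∈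
      convexHull ℝ { A : Matrix (Fin d × Fin d) (Fin d × Fin d) ℂ |
        ∃ U : Matrix.unitaryGroup (Fin d) ℂ,
          A = Matrix.vecMulVec
            ((Matrix.kroneckerMap (· * ·) (U : Matrix (Fin d) (Fin d) ℂ)
              ((U : Matrix (Fin d) (Fin d) ℂ).map (starRingEnd ℂ))).mulVec φ)
            (star ((Matrix.kroneckerMap (· * ·) (U : Matrix (Fin d) (Fin d) ℂ)
              ((U : Matrix (Fin d) (Fin d) ℂ).map (starRingEnd ℂ))).mulVec φ)) } := by
  have hb0 : 0 ≤ b := le_trans (by positivity) hb.1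
  have hφ' : φ = vec (sqrtDiagonal lam)ᵀ := by
    subst hφ; ext ⟨i, j⟩; simp [sqrtDiagonal, diagonal_apply]
  have hζ := Complex.isPrimitiveRoot_exp d (by omega)
  set ρ : ℝ → Matrix (Fin d × Fin d) (Fin d × Fin d) ℂ := fun a =>
    b • Φ + (a / ((d : ℝ) - 1)) • (Q - Φ) + ((1 - a - b) / ((d : ℝ) * ((d : ℝ) - 1))) • (1 - Q)
  have hρ (a : ℝ) : ρ a = ρ 0 + a • (ρ 1 - ρ 0) := by simp only [ρ]; module
  have h0 : ρ 0 ∈ convexHull ℝ (isoOrbit φ) := by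
    have := twirl_mem_convexHull_isoOrbit (dftMatrix_mem_unitaryGroup hζ) (sqrtDiagonal lam)
    simp only [Fintype.card_fin, inv_smul_twirl_dftMatrix_conj hd hζ hlam hsum hs hb0] at this
    rw [hφ', show ρ 0 = _ from phasePermIso_eq_twirlForm hd hΦ hQ 0 b]
    convert this using 2 <;> push_cast <;> ring
  have h1 : ρ 0 + (1 - b) • (ρ 1 - ρ 0) ∈ convexHull ℝ (isoOrbit φ) := by
    have := twirl_mem_convexHull_isoOrbit (Submonoid.one_mem _) (sqrtDiagonal lam)
    simp only [Fintype.card_fin, Matrix.one_mul, conjTranspose_one, Matrix.mul_one,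
      inv_smul_twirl_sqrtDiagonal hlam hsum hs hb0] at this
    rw [← hρ, hφ', show ρ (1 - b) = _ from phasePermIso_eq_twirlForm hd hΦ hQ (1 - b) b]
    have hd1 : (d : ℂ) - 1 ≠ 0 := by rw [sub_ne_zero]; exact_mod_cast (by omega : d ≠ 1)
    convert this using 2 <;> push_cast <;> field_simp <;> ring
  show ρ a ∈ convexHull ℝ (isoOrbit φ)
  rw [hρ]
  exact (convex_convexHull ℝ _).add_smul_mem_of_le h0 h1 haa.1 haa.2
end

section
/- Let d ≥ 2, let β ∈ [1/d, 1], and let λ : Fin d → ℝ be a probability vector (λᵢ ≥ 0, Σᵢ λᵢ = 1) satisfying Σᵢ √λᵢ = √(d·β). Set t := 1 − (1/d)·(√(1−β) − √(β·(d−1)))². Then Σᵢ λᵢ² ≤ t² + (1−t)²/(d−1). -/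
/-!
Write `xᵢ = √λᵢ`, so `∑ xᵢ² = 1` and `∑ xᵢ = √(dβ)`. The claimed bound is `∑ xᵢ⁴` evaluated at
the vector `(y₁, y₂, …, y₂)` with the same two moments, where `y₁² = t` and `(d - 1) y₂² = 1 - t`.
Cauchy–Schwarz on the remaining coordinates shows every `xᵢ ≤ y₁`. On `[0, y₁]` the quartic `x⁴`
lies below the quadratic that meets it at `y₁` and touches it at `y₂`; summing that quadratic
over the `xᵢ` only involves the two prescribed moments, so it gives the same value as on
`(y₁, y₂, …, y₂)`, namely `y₁⁴ + (d - 1) y₂⁴`.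
-/

open Finset

section
variable {ι : Type*} [Fintype ι]

theorem sq_sum_sub_le_card_sub_one_mul (x : ι → ℝ) (i : ι) :
    (∑ j, x j - x i) ^ 2 ≤ ((Fintype.card ι : ℝ) - 1) * (∑ j, x j ^ 2 - x i ^ 2) := by
  classical
  have hcard : ((univ.erase i).card : ℝ) = (Fintype.card ι : ℝ) - 1 := by
    rw [card_erase_of_mem (mem_univ i), card_univ,
      Nat.cast_sub (Fintype.card_pos_iff.2 ⟨i⟩), Nat.cast_one]
  rw [← add_sum_erase _ _ (mem_univ i), ← add_sum_erase _ (fun j => x j ^ 2) (mem_univ i),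
    add_sub_cancel_left, add_sub_cancel_left, ← hcard]
  exact sq_sum_le_card_mul_sum_sq

theorem le_of_sum_eq_of_sum_sq_eq {x : ι → ℝ} {y₁ y₂ : ℝ} (hy : y₂ ≤ y₁)
    (h₁ : ∑ i, x i = y₁ + ((Fintype.card ι : ℝ) - 1) * y₂)
    (h₂ : ∑ i, x i ^ 2 = y₁ ^ 2 + ((Fintype.card ι : ℝ) - 1) * y₂ ^ 2) (i : ι) :
    x i ≤ y₁ := by
  have hCS := sq_sum_sub_le_card_sub_one_mul x i
  set m : ℝ := (Fintype.card ι : ℝ) - 1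
  have hm : 0 ≤ m := sub_nonneg.2 (by exact_mod_cast Fintype.card_pos_iff.2 ⟨i⟩)
  rw [h₁, h₂] at hCS
  by_contra! hxi
  -- the Cauchy–Schwarz defect factors through `x i - y₁`, and both factors are positive
  have hpos : 0 < (x i - y₁) * (x i - y₁ + m * (y₁ + x i - 2 * y₂)) :=
    mul_pos (by linarith) (by nlinarith)
  have hCS_factor : (x i - y₁) * (x i - y₁ + m * (y₁ + x i - 2 * y₂))
      = (y₁ + m * y₂ - x i) ^ 2 - m * (y₁ ^ 2 + m * y₂ ^ 2 - x i ^ 2) := by ring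
  linarith

theorem pow_four_le_of_le {x y₁ y₂ : ℝ} (hx : 0 ≤ x) (hxy : x ≤ y₁) (hy₂ : 0 ≤ y₂) :
    x ^ 4 ≤ (y₁ ^ 2 + 2 * y₁ * y₂ + 3 * y₂ ^ 2) * x ^ 2 - 2 * y₂ * (y₁ + y₂) ^ 2 * x
      + y₂ ^ 2 * (y₁ ^ 2 + 2 * y₁ * y₂) := by
  have h : 0 ≤ (y₁ - x) * (x - y₂) ^ 2 * (x + y₁ + 2 * y₂) :=
    mul_nonneg (mul_nonneg (by linarith) (sq_nonneg _)) (by linarith)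
  linarith [show (y₁ ^ 2 + 2 * y₁ * y₂ + 3 * y₂ ^ 2) * x ^ 2 - 2 * y₂ * (y₁ + y₂) ^ 2 * x
      + y₂ ^ 2 * (y₁ ^ 2 + 2 * y₁ * y₂) - x ^ 4
      = (y₁ - x) * (x - y₂) ^ 2 * (x + y₁ + 2 * y₂) by ring]

theorem sum_pow_four_le {x : ι → ℝ} {y₁ y₂ : ℝ} (hx : ∀ i, 0 ≤ x i) (hy₂ : 0 ≤ y₂)
    (hy : y₂ ≤ y₁) (h₁ : ∑ i, x i = y₁ + ((Fintype.card ι : ℝ) - 1) * y₂)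
    (h₂ : ∑ i, x i ^ 2 = y₁ ^ 2 + ((Fintype.card ι : ℝ) - 1) * y₂ ^ 2) :
    ∑ i, x i ^ 4 ≤ y₁ ^ 4 + ((Fintype.card ι : ℝ) - 1) * y₂ ^ 4 := by
  set A := y₁ ^ 2 + 2 * y₁ * y₂ + 3 * y₂ ^ 2
  set B := 2 * y₂ * (y₁ + y₂) ^ 2
  set C := y₂ ^ 2 * (y₁ ^ 2 + 2 * y₁ * y₂)
  calc ∑ i, x i ^ 4 ≤ ∑ i, (A * x i ^ 2 - B * x i + C) :=
        sum_le_sum fun i _ => pow_four_le_of_le (hx i) (le_of_sum_eq_of_sum_sq_eq hy h₁ h₂ i) hy₂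
    _ = A * ∑ i, x i ^ 2 - B * ∑ i, x i + Fintype.card ι * C := by
        simp only [sum_add_distrib, sum_sub_distrib, ← mul_sum, sum_const, card_univ, nsmul_eq_mul]
    _ = y₁ ^ 4 + ((Fintype.card ι : ℝ) - 1) * y₂ ^ 4 := by
        rw [h₁, h₂]; ring

end

theorem peak_tail_moments {a p c e : ℝ} (hap : a ^ 2 + p ^ 2 = 1) (hc : c ≠ 0)
    (he : e ^ 2 = c ^ 2 + 1) :
    (a + p * c) / e + c ^ 2 * ((a * c - p) / (e * c)) = e * a ∧
      ((a + p * c) / e) ^ 2 + c ^ 2 * ((a * c - p) / (e * c)) ^ 2 = 1 ∧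
      ((a + p * c) / e) ^ 2 = 1 - 1 / e ^ 2 * (p - a * c) ^ 2 := by
  have he0 : e ≠ 0 := by rintro rfl; nlinarith
  refine ⟨?_, ?_, ?_⟩
  · field_simp
    linear_combination (-a) * he
  · field_simp
    linear_combination (c ^ 2 + 1) * hap - he
  · field_simp
    linear_combination (c ^ 2 + 1) * hap - he

theorem exists_extremal_of_overlap {d β : ℝ} (hd : 1 < d) (hβ : β ∈ Set.Icc (1 / d) 1) :
    ∃ y₁ y₂ : ℝ, 0 ≤ y₂ ∧ y₂ ≤ y₁ ∧ y₁ + (d - 1) * y₂ = √(d * β) ∧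
      y₁ ^ 2 + (d - 1) * y₂ ^ 2 = 1 ∧
      y₁ ^ 2 = 1 - 1 / d * (√(1 - β) - √(β * (d - 1))) ^ 2 := by
  obtain ⟨hβd, hβ1⟩ := hβ
  have hd0 : 0 < d := by linarith
  have hβ0 : 0 ≤ β := le_trans (by positivity) hβd
  set a := √β
  set p := √(1 - β)
  set c := √(d - 1)
  set e := √d
  have hc : 0 < c := Real.sqrt_pos.2 (by linarith)
  have he : 0 < e := Real.sqrt_pos.2 hd0
  have hc2 : c ^ 2 = d - 1 := Real.sq_sqrt (by linarith)
  have he2 : e ^ 2 = c ^ 2 + 1 := by rw [Real.sq_sqrt hd0.le, hc2]; ring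
  have hap : a ^ 2 + p ^ 2 = 1 := by
    rw [Real.sq_sqrt hβ0, Real.sq_sqrt (by linarith)]; ring
  have hac : √(β * (d - 1)) = a * c := Real.sqrt_mul hβ0 _
  have hpac : p ≤ a * c := by
    rw [← hac]
    refine Real.sqrt_le_sqrt ?_
    rw [div_le_iff₀ hd0] at hβd
    linarith
  obtain ⟨h₁, h₂, ht⟩ := peak_tail_moments hap hc.ne' he2
  refine ⟨(a + p * c) / e, (a * c - p) / (e * c), ?_, ?_, ?_, ?_, ?_⟩
  · exact div_nonneg (by linarith) (by positivity)
  · rw [div_le_div_iff₀ (by positivity) he]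
    have : 0 ≤ e * p * (c ^ 2 + 1) := by positivity
    linarith [show (a + p * c) * (e * c) - (a * c - p) * e = e * p * (c ^ 2 + 1) by ring]
  · rwa [← hc2, Real.sqrt_mul hd0.le]
  · rwa [← hc2]
  · rw [hac, ht, he2, hc2, sub_add_cancel]

/-- For a probability vector `λ` on `Fin d` with `∑ᵢ √λᵢ = √(dβ)` and
`t = 1 − (1/d)(√(1−β) − √(β(d−1)))²`, one has `∑ᵢ λᵢ² ≤ t² + (1−t)²/(d−1)`. -/
theorem sum_sq_le_of_overlap (d : ℕ) (hd : 2 ≤ d)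
    (β : ℝ) (hβ : β ∈ Set.Icc (1 / (d : ℝ)) 1)
    (lam : Fin d → ℝ) (hlam : ∀ i, 0 ≤ lam i) (hsum : ∑ i, lam i = 1)
    (hs : ∑ i, Real.sqrt (lam i) = Real.sqrt (d * β))
    (t : ℝ)
    (ht : t = 1 - (1 / (d : ℝ)) *
      (Real.sqrt (1 - β) - Real.sqrt (β * ((d : ℝ) - 1))) ^ 2) :
    ∑ i, (lam i) ^ 2 ≤ t ^ 2 + (1 - t) ^ 2 / ((d : ℝ) - 1) := by
  have hd1 : (1 : ℝ) < d := by exact_mod_cast hd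
  obtain ⟨y₁, y₂, hy₂, hy, h₁, h₂, hty⟩ := exists_extremal_of_overlap hd1 hβ
  rw [← hty] at ht
  have hsq : ∀ i, √(lam i) ^ 2 = lam i := fun i => Real.sq_sqrt (hlam i)
  have hbound := sum_pow_four_le (x := fun i => √(lam i)) (fun _ => Real.sqrt_nonneg _) hy₂ hy
    (by rw [Fintype.card_fin, hs, h₁]) (by rw [Fintype.card_fin, h₂]; simp only [hsq, hsum])
  have htail : ((d : ℝ) - 1) * y₂ ^ 2 = 1 - t := by rw [ht]; linarith
  calc ∑ i, lam i ^ 2 = ∑ i, √(lam i) ^ 4 :=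
        sum_congr rfl fun i _ => by rw [show 4 = 2 * 2 from rfl, pow_mul, hsq]
    _ ≤ y₁ ^ 4 + ((d : ℝ) - 1) * y₂ ^ 4 := by simpa only [Fintype.card_fin] using hbound
    _ = t ^ 2 + (1 - t) ^ 2 / ((d : ℝ) - 1) := by
      rw [← htail, ht]
      field_simp [(sub_pos.2 hd1).ne']
end
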